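/- arXiv:1708.05779 — 5 statements merged into one kernel-verified Lean document; each statement's English description precedes it below -/
import Mathlib

section
/- Let G be a connected graph of order n with connected complement, and let k be an integer with 3 ≤ k ≤ n. If sdiam_k(G) ≥ k + r for some r with 1 ≤ r ≤ k − 1, then sdiam_k(complement of G) ≤ 2k − r. Moreover, if sdiam_k(G) ≥ 2k, then sdiam_k(complement of G) ≤ k. -/
open SimpleGraph Finset

variable {V : Type*}

/-- The Steiner distance of a vertex set `S` in `G`: the minimum number of edges
of a connected subgraph of `G` whose vertex set contains `S`. -/
noncomputable def steinerDist (G : SimpleGraph V) (S : Set V) : ℕ :=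
  sInf {n | ∃ H : G.Subgraph, H.Connected ∧ S ⊆ H.verts ∧ H.edgeSet.ncard = n}

/-- The Steiner `k`-diameter of `G`: the maximum Steiner distance among `k`-subsets. -/
noncomputable def steinerDiam [Fintype V] (G : SimpleGraph V) (k : ℕ) : ℕ :=
  (Finset.powersetCard k (Finset.univ : Finset V)).sup fun S => steinerDist G (↑S)

private lemma reach_of_walk (Γ : SimpleGraph V) (W : Set V) {x y : V} (p : Γ.Walk x y)
    (hp : ∀ z ∈ p.support, z ∈ W) (hx : x ∈ W) (hy : y ∈ W) :
    ((⊤ : Γ.Subgraph).induce W).coe.Reachable ⟨x, hx⟩ ⟨y, hy⟩ := by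
  induction p with
  | nil => rfl
  | @cons a b c hadj q ih =>
    have hb : b ∈ W := hp b (by simp [SimpleGraph.Walk.support_cons])
    have h1 : ((⊤ : Γ.Subgraph).induce W).coe.Adj ⟨a, hx⟩ ⟨b, hb⟩ := by
      simp only [Subgraph.coe_adj, Subgraph.induce_adj, Subgraph.top_adj]
      exact ⟨hx, hb, hadj⟩
    exact h1.reachable.trans (ih (fun z hz => hp z (by simp [SimpleGraph.Walk.support_cons, hz])) hb hy)

private lemma induce_conn_base (Γ : SimpleGraph V) (W : Set V) (b : V) (hb : b ∈ W)
    (h : ∀ x ∈ W, ∃ p : Γ.Walk x b, ∀ z ∈ p.support, z ∈ W) :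
    ((⊤ : Γ.Subgraph).induce W).Connected := by
  rw [Subgraph.connected_iff]
  refine ⟨⟨?_⟩, ⟨b, hb⟩⟩
  rintro ⟨x, hx⟩ ⟨y, hy⟩
  obtain ⟨p, hp⟩ := h x hx
  obtain ⟨q, hq⟩ := h y hy
  exact (reach_of_walk Γ W p hp hx hb).trans (reach_of_walk Γ W q hq hy hb).symm

private lemma union_conn {Γ : SimpleGraph V} {P Q : Set V}
    (hP : ((⊤ : Γ.Subgraph).induce P).Connected) (hQ : ((⊤ : Γ.Subgraph).induce Q).Connected)
    (hPQ : (P ∩ Q).Nonempty) : ((⊤ : Γ.Subgraph).induce (P ∪ Q)).Connected := by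
  have hsup := Subgraph.connected_sup hP.preconnected hQ.preconnected (by simpa using hPQ)
  refine hsup.mono ?_ ?_
  · constructor
    · simp
    · rintro v w (h | h) <;> simp only [Subgraph.induce_adj] at h ⊢
      · exact ⟨Or.inl h.1, Or.inl h.2.1, h.2.2⟩
      · exact ⟨Or.inr h.1, Or.inr h.2.1, h.2.2⟩
  · simp

private lemma tree_lemma (Γ : SimpleGraph V) [Fintype V] :
    ∀ (n : ℕ) (W : Set V), W.ncard = n → ((⊤ : Γ.Subgraph).induce W).Connected →
    ∃ H : Γ.Subgraph, H.Connected ∧ H.verts = W ∧ H.edgeSet.ncard + 1 ≤ W.ncard := by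
  intro n
  induction n using Nat.strong_induction_on with
  | _ n ih =>
    intro W hn hc
    classical
    have hne : W.Nonempty := by simpa using hc.nonempty
    have hfin : W.Finite := Set.toFinite W
    have hn1 : 1 ≤ n := by
      rw [← hn]
      exact (Set.ncard_pos hfin).mpr hne
    rcases eq_or_lt_of_le hn1 with h1 | h2
    · -- singleton
      obtain ⟨w, hw⟩ := (Set.ncard_eq_one).mp (by omega : W.ncard = 1)
      refine ⟨Γ.singletonSubgraph w, Subgraph.singletonSubgraph_connected, by simp [hw], ?_⟩
      rw [SimpleGraph.edgeSet_singletonSubgraph]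
      simp [hw]
    · -- at least two vertices
      set H0 : Γ.Subgraph := (⊤ : Γ.Subgraph).induce W with hH0
      have hcc : H0.coe.Connected := hc.coe
      haveI : Fintype ↥W := hfin.fintype
      obtain ⟨x0, hx0⟩ := hne
      set w0 : ↥W := ⟨x0, by simpa using hx0⟩ with hw0
      obtain ⟨v, -, hv⟩ := Finset.exists_max_image (Finset.univ : Finset ↥W)
        (fun x => H0.coe.dist w0 x) ⟨w0, Finset.mem_univ _⟩
      have hvmax : ∀ x : ↥W, H0.coe.dist w0 x ≤ H0.coe.dist w0 v :=
        fun x => hv x (Finset.mem_univ _)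
      -- there is a vertex different from w0
      have h2card : 1 < Fintype.card ↥W := by
        have hcard : Fintype.card ↥W = n := by
          rw [← hn, Set.ncard_eq_toFinset_card', Set.toFinset_card]
        omega
      obtain ⟨y0, hy0⟩ := Fintype.exists_ne_of_one_lt_card h2card w0
      have hdistpos : 1 ≤ H0.coe.dist w0 v := by
        have := hvmax y0
        have h0 : H0.coe.dist w0 y0 ≠ 0 := by
          intro h
          exact hy0 ((hcc.dist_eq_zero_iff).mp h).symm
        omega
      have hvne : v ≠ w0 := by
        intro h
        have h0 : H0.coe.dist w0 v = 0 := by rw [h]; exact SimpleGraph.dist_self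
        omega
      -- W minus v is connected
      set W' : Set V := W \ {(v : V)} with hW'
      have hW'sub : W' ⊆ W := Set.diff_subset
      have hw0W' : (w0 : V) ∈ W' := by
        refine ⟨w0.2, ?_⟩
        simp only [Set.mem_singleton_iff]
        intro h
        exact hvne (Subtype.ext h.symm)
      have hconnW' : ((⊤ : Γ.Subgraph).induce W').Connected := by
        apply induce_conn_base Γ W' (w0 : V) hw0W'
        intro x hxW'
        have hxW : x ∈ W := hxW'.1
        have hxv : x ≠ (v : V) := hxW'.2
        set xs : ↥W := ⟨x, by simpa using hxW⟩ with hxs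
        obtain ⟨p, hp⟩ := hcc.exists_walk_length_eq_dist w0 xs
        have hvsup : v ∉ p.support := by
          intro hvs
          have hspec := p.take_spec hvs
          have hlen : (p.takeUntil v hvs).length + (p.dropUntil v hvs).length = p.length := by
            exact (SimpleGraph.Walk.length_append _ _).symm.trans (congrArg SimpleGraph.Walk.length hspec)
          have hd1 : H0.coe.dist w0 v ≤ (p.takeUntil v hvs).length :=
            SimpleGraph.dist_le _
          have hd2 : 1 ≤ (p.dropUntil v hvs).length := by
            rcases Nat.eq_zero_or_pos (p.dropUntil v hvs).length with h0 | h0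
            · exfalso
              have heq := (p.dropUntil v hvs).eq_of_length_eq_zero h0
              exact hxv ((congrArg Subtype.val heq).symm)
            · exact h0
          have hd3 : H0.coe.dist w0 xs ≤ H0.coe.dist w0 v := hvmax xs
          omega
        -- map the reverse walk to the ambient graph
        set q := (p.reverse.map H0.hom)
        refine ⟨q.copy rfl rfl, ?_⟩
        intro z hz
        have : z ∈ (p.reverse.map H0.hom).support := hz
        replace this := (congrArg (z ∈ ·) (SimpleGraph.Walk.support_map H0.hom p.reverse)).mp this
        rw [List.mem_map] at this
        obtain ⟨zs, hzs, rfl⟩ := this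
        replace hzs := (congrArg (zs ∈ ·) (SimpleGraph.Walk.support_reverse p)).mp hzs
        rw [List.mem_reverse] at hzs
        refine ⟨zs.2, ?_⟩
        simp only [Set.mem_singleton_iff]
        intro h
        have hzv : zs = v := Subtype.ext h
        exact hvsup (hzv ▸ hzs)
      -- apply induction hypothesis to W'
      have hvW : (v : V) ∈ W := v.2
      have hncard' : W'.ncard = n - 1 := by
        rw [hW', Set.ncard_diff_singleton_of_mem hvW, hn]
      obtain ⟨H', hH'conn, hH'verts, hH'edges⟩ := ih (n-1) (by omega) W' hncard' hconnW'
      -- find a neighbor of v inside W'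
      obtain ⟨pw⟩ := hcc v w0
      have hpwnil : ¬ pw.Nil := SimpleGraph.Walk.not_nil_of_ne hvne
      set u : ↥W := pw.getVert 1 with hu
      have hadj : H0.coe.Adj v u := pw.adj_snd hpwnil
      have hadjΓ : Γ.Adj (u : V) (v : V) := by
        have := hadj
        change H0.Adj v u at this
        simp only [hH0, Subgraph.induce_adj, Subgraph.top_adj] at this
        exact this.2.2.symm
      have huv : (u : V) ≠ (v : V) := fun h => hadjΓ.ne h
      have huW' : (u : V) ∈ W' := ⟨u.2, by simpa using huv⟩
      -- combine
      refine ⟨H' ⊔ Γ.subgraphOfAdj hadjΓ, ?_, ?_, ?_⟩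
      · apply Subgraph.connected_sup hH'conn.preconnected (Subgraph.subgraphOfAdj_connected hadjΓ).preconnected
        refine ⟨(u : V), ?_⟩
        simp [hH'verts, huW']
      · rw [Subgraph.verts_sup, hH'verts, subgraphOfAdj_verts, hW']
        ext z
        simp only [Set.mem_union, Set.mem_diff, Set.mem_singleton_iff, Set.mem_insert_iff]
        constructor
        · rintro (⟨hzW, -⟩ | (rfl | rfl))
          · exact hzW
          · exact u.2
          · exact hvW
        · intro hzW
          by_cases hzv : z = ↑v
          · right; right; exact hzv
          · left; exact ⟨hzW, hzv⟩
      · rw [Subgraph.edgeSet_sup]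
        have hb1 : ((Γ.subgraphOfAdj hadjΓ).edgeSet).ncard ≤ 1 := by
          rw [SimpleGraph.edgeSet_subgraphOfAdj]
          simp [Set.ncard_singleton]
        have hb2 : (H'.edgeSet ∪ (Γ.subgraphOfAdj hadjΓ).edgeSet).ncard ≤
            H'.edgeSet.ncard + ((Γ.subgraphOfAdj hadjΓ).edgeSet).ncard :=
          Set.ncard_union_le _ _
        rw [hncard'] at hH'edges
        rw [hn]
        omega

private lemma steinerDist_add_one_le (Γ : SimpleGraph V) [Fintype V] {T W : Set V}
    (hTW : T ⊆ W) (hc : ((⊤ : Γ.Subgraph).induce W).Connected) :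
    steinerDist Γ T + 1 ≤ W.ncard := by
  obtain ⟨H, hHc, hHv, hHe⟩ := tree_lemma Γ W.ncard W rfl hc
  have hmem : H.edgeSet.ncard ∈
      {n | ∃ H' : Γ.Subgraph, H'.Connected ∧ T ⊆ H'.verts ∧ H'.edgeSet.ncard = n} :=
    ⟨H, hHc, by rw [hHv]; exact hTW, rfl⟩
  have := Nat.sInf_le hmem
  unfold steinerDist
  omega

private lemma sup_extract {α : Type*} {s : Finset α} {f : α → ℕ} {n : ℕ} (hn : 0 < n)
    (h : n ≤ s.sup f) : ∃ a ∈ s, n ≤ f a := by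
  by_contra hcon
  push_neg at hcon
  have : s.sup f ≤ n - 1 := Finset.sup_le fun a ha => by have := hcon a ha; omega
  omega

private lemma main1 [Fintype V] (G : SimpleGraph V) (k r : ℕ) (hk : 3 ≤ k)
    (hr : 1 ≤ r) (hrk : r + 1 ≤ k) (S T : Finset V) (hS : S.card = k) (hT : T.card = k)
    (hP : ∀ W : Set V, ↑S ⊆ W → ((⊤ : G.Subgraph).induce W).Connected → k + r + 1 ≤ W.ncard) :
    ∃ W : Set V, ↑T ⊆ W ∧ W.ncard ≤ 2 * k - r + 1 ∧
      ((⊤ : Gᶜ.Subgraph).induce W).Connected := by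
  classical
  set SS : Set V := ↑S with hSS
  set Γs : SimpleGraph ↥SS := G.induce SS with hΓs
  haveI : Fintype Γs.ConnectedComponent :=
    Fintype.ofSurjective Γs.connectedComponentMk (fun c => c.exists_rep)
  set m : ℕ := Fintype.card Γs.ConnectedComponent with hm
  set cset : Γs.ConnectedComponent → Set V :=
    fun c => {v | ∃ h : v ∈ SS, Γs.connectedComponentMk ⟨v, h⟩ = c} with hcset
  have csub : ∀ c, cset c ⊆ SS := fun c v hv => hv.1
  have hmemc : ∀ v (h : v ∈ SS), v ∈ cset (Γs.connectedComponentMk ⟨v, h⟩) :=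
    fun v h => ⟨h, rfl⟩
  have cuniq : ∀ {v c c'}, v ∈ cset c → v ∈ cset c' → c = c' := by
    rintro v c c' ⟨h1, hc1⟩ ⟨h2, hc2⟩
    rw [← hc1, ← hc2]
  have cne : ∀ c, (cset c).Nonempty := by
    intro c
    obtain ⟨s, hs⟩ := c.exists_rep
    exact ⟨(s : V), s.2, by rwa [Subtype.coe_eta]⟩
  have hbigU : (⋃ c ∈ (Finset.univ : Finset Γs.ConnectedComponent), cset c) = SS := by
    apply Set.Subset.antisymm
    · intro v hv
      simp only [Set.mem_iUnion] at hv
      obtain ⟨c, -, hc⟩ := hv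
      exact csub c hc
    · intro v hv
      simp only [Set.mem_iUnion]
      exact ⟨_, Finset.mem_univ _, hmemc v hv⟩
  -- each component is connected
  have cconn : ∀ c, ((⊤ : G.Subgraph).induce (cset c)).Connected := by
    intro c
    obtain ⟨b, hb⟩ := cne c
    apply induce_conn_base G (cset c) b hb
    intro x hx
    obtain ⟨hxS, hxc⟩ := hx
    obtain ⟨hbS, hbc⟩ := hb
    have hreach : Γs.Reachable ⟨x, hxS⟩ ⟨b, hbS⟩ :=
      SimpleGraph.ConnectedComponent.exact (by rw [hxc, hbc])
    refine hreach.elim (fun w => ?_)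
    refine ⟨(w.map (SimpleGraph.Embedding.induce SS).toHom).copy rfl rfl, ?_⟩
    intro z hz
    replace hz : z ∈ (w.map (SimpleGraph.Embedding.induce SS).toHom).support := hz
    rw [SimpleGraph.Walk.support_map, List.mem_map] at hz
    obtain ⟨zs, hzs, rfl⟩ := hz
    have hreach2 : Γs.Reachable ⟨x, hxS⟩ zs := ⟨w.takeUntil zs hzs⟩
    have hzz : Γs.connectedComponentMk zs = c := by
      rw [← hxc]
      exact SimpleGraph.ConnectedComponent.sound hreach2.symm
    exact ⟨zs.2, hzz⟩
  -- the blob lemma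
  have blob : ∀ (t : V) (D : Finset Γs.ConnectedComponent),
      (∀ c ∈ D, ∃ s ∈ cset c, G.Adj t s) →
      ((⊤ : G.Subgraph).induce ({t} ∪ ⋃ c ∈ D, cset c)).Connected := by
    intro t D
    induction D using Finset.induction_on with
    | empty =>
      intro _
      have : ({t} ∪ ⋃ c ∈ (∅ : Finset Γs.ConnectedComponent), cset c) = {t} := by simp
      rw [this]
      apply induce_conn_base G {t} t rfl
      intro x hx
      rcases hx with rfl
      exact ⟨SimpleGraph.Walk.nil, by simp⟩
    | @insert c D hcD ihD =>
      intro hyp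
      obtain ⟨s, hsc, hadj⟩ := hyp c (Finset.mem_insert_self c D)
      have hpair : ((⊤ : G.Subgraph).induce {t, s}).Connected :=
        Subgraph.top_induce_pair_connected_of_adj hadj
      have hblob1 : ((⊤ : G.Subgraph).induce ({t, s} ∪ cset c)).Connected :=
        union_conn hpair (cconn c) ⟨s, by simp, hsc⟩
      have hset1 : ({t, s} ∪ cset c) = ({t} ∪ cset c) := by
        ext z
        simp only [Set.mem_union, Set.mem_insert_iff, Set.mem_singleton_iff]
        constructor
        · rintro ((rfl | rfl) | hz)
          · exact Or.inl rfl
          · exact Or.inr hsc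
          · exact Or.inr hz
        · rintro (rfl | hz)
          · exact Or.inl (Or.inl rfl)
          · exact Or.inr hz
      rw [hset1] at hblob1
      have ihD' := ihD (fun c' hc' => hyp c' (Finset.mem_insert_of_mem hc'))
      have hfin : ((⊤ : G.Subgraph).induce
          (({t} ∪ ⋃ c' ∈ D, cset c') ∪ ({t} ∪ cset c))).Connected :=
        union_conn ihD' hblob1 ⟨t, by simp, by simp⟩
      have hset2 : (({t} ∪ ⋃ c' ∈ D, cset c') ∪ ({t} ∪ cset c)) =
          ({t} ∪ ⋃ c' ∈ insert c D, cset c') := by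
        rw [Finset.set_biUnion_insert]
        ext z
        simp only [Set.mem_union, Set.mem_singleton_iff]
        tauto
      rwa [hset2] at hfin
  -- basic cardinalities
  have hSSncard : SS.ncard = k := by rw [hSS, Set.ncard_coe_finset, hS]
  have hSne : SS.Nonempty := by
    rw [hSS, Finset.coe_nonempty, ← Finset.card_pos, hS]; omega
  obtain ⟨s0, hs0⟩ := hSne
  have hmk : m ≤ k := by
    have hsurj : Function.Surjective (Γs.connectedComponentMk) := fun c => c.exists_rep
    have h1 : m ≤ Fintype.card ↥SS := Fintype.card_le_of_surjective _ hsurj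
    have h2 : Fintype.card ↥SS = k := by
      rw [← hSSncard, Set.ncard_eq_toFinset_card', Set.toFinset_card]
    omega
  have hm2 : 2 ≤ m := by
    by_contra hcon
    push_neg at hcon
    have hall : ∀ v (h : v ∈ SS),
        Γs.connectedComponentMk ⟨v, h⟩ = Γs.connectedComponentMk ⟨s0, hs0⟩ := by
      intro v h
      have := Fintype.card_le_one_iff.mp (by omega : Fintype.card Γs.ConnectedComponent ≤ 1)
      exact this _ _
    have hSSc : SS = cset (Γs.connectedComponentMk ⟨s0, hs0⟩) := by
      apply Set.Subset.antisymm
      · intro v hv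
        exact ⟨hv, hall v hv⟩
      · exact csub _
    have := hP SS (by rw [hSS]) (by rw [hSSc]; exact cconn _)
    omega
  -- Y sets
  set Y : V → Finset Γs.ConnectedComponent :=
    fun t => Finset.univ.filter (fun c => ∃ s ∈ cset c, G.Adj t s) with hY
  have hYmem : ∀ t c, c ∈ Y t ↔ ∃ s ∈ cset c, G.Adj t s := by
    intro t c
    rw [hY]
    simp
  have hYuniv : ∀ t, t ∉ SS → Y t ≠ Finset.univ := by
    intro t htS hcon
    have hb := blob t Finset.univ (fun c _ => (hYmem t c).mp (by rw [hcon]; exact Finset.mem_univ c))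
    rw [hbigU] at hb
    have hsub : SS ⊆ {t} ∪ SS := Set.subset_union_right
    have := hP ({t} ∪ SS) (by rw [hSS] at hsub ⊢; exact hsub) hb
    have hcard : ({t} ∪ SS).ncard ≤ k + 1 := by
      have h1 : ({t} ∪ SS).ncard ≤ ({t} : Set V).ncard + SS.ncard := Set.ncard_union_le _ _
      rw [Set.ncard_singleton, hSSncard] at h1
      omega
    omega
  -- a small connected superset of S gives a contradiction
  have hfalse : ∀ A : Finset V, A.card ≤ r →
      ((⊤ : G.Subgraph).induce (SS ∪ ↑A)).Connected → False := by
    intro A hAcard hconn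
    have h1 := hP (SS ∪ ↑A) Set.subset_union_left hconn
    have h2 : (SS ∪ ↑A : Set V).ncard ≤ k + r := by
      have h3 := Set.ncard_union_le SS (↑A : Set V)
      have hA2 : (↑A : Set V).ncard = A.card := Set.ncard_coe_finset A
      omega
    omega
  -- the chain argument
  have chain : ∀ t0 : V, t0 ∈ (↑T : Set V) → t0 ∉ SS → (Y t0).Nonempty →
      (∀ c c', c ≠ c' → ∃ t'', (t'' ∈ (↑T : Set V) ∧ t'' ∉ SS) ∧ c ∈ Y t'' ∧ c' ∈ Y t'') →
      ∀ j : ℕ, j + 1 ≤ r →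
      ∃ (A : Finset V) (U : Finset Γs.ConnectedComponent),
        (∀ a ∈ A, a ∈ (↑T : Set V) ∧ a ∉ SS) ∧ A.card ≤ j + 1 ∧
        (∀ a ∈ A, Y a ⊆ U) ∧ (Y t0).card + j ≤ U.card ∧ U.Nonempty ∧
        ((⊤ : G.Subgraph).induce ((⋃ c ∈ U, cset c) ∪ ↑A)).Connected := by
    intro t0 ht0T ht0S hY0 hcov j
    induction j with
    | zero =>
      intro _
      refine ⟨{t0}, Y t0, ?_, by simp, ?_, by omega, hY0, ?_⟩
      · intro a ha
        rw [Finset.mem_singleton] at ha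
        subst ha
        exact ⟨ht0T, ht0S⟩
      · intro a ha
        rw [Finset.mem_singleton] at ha
        subst ha
        exact Finset.Subset.refl _
      · have hb := blob t0 (Y t0) (fun c hc => (hYmem t0 c).mp hc)
        have hset : ({t0} ∪ ⋃ c ∈ Y t0, cset c) = ((⋃ c ∈ Y t0, cset c) ∪ ↑({t0} : Finset V)) := by
          rw [Set.union_comm]
          simp
        rwa [hset] at hb
    | succ n ihn =>
      intro hnr
      obtain ⟨A, U, hAT, hAcard, hAY, hUcard, hUne, hconn⟩ := ihn (by omega)
      by_cases hUuniv : U = Finset.univ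
      · exfalso
        apply hfalse A (by omega)
        have : (⋃ c ∈ U, cset c) = SS := by rw [hUuniv, hbigU]
        rwa [this] at hconn
      · obtain ⟨i, hi⟩ : ∃ i, i ∉ U := by
          by_contra hcon
          push_neg at hcon
          exact hUuniv (Finset.eq_univ_iff_forall.mpr hcon)
        obtain ⟨jj, hjj⟩ := hUne
        have hij : i ≠ jj := fun h => hi (h ▸ hjj)
        obtain ⟨t', ⟨ht'T, ht'S⟩, hit', hjjt'⟩ := hcov i jj hij
        have ht'A : t' ∉ A := by
          intro hmem
          exact hi (hAY t' hmem hit')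
        refine ⟨insert t' A, U ∪ Y t', ?_, ?_, ?_, ?_, ?_, ?_⟩
        · intro a ha
          rcases Finset.mem_insert.mp ha with rfl | ha'
          · exact ⟨ht'T, ht'S⟩
          · exact hAT a ha'
        · rw [Finset.card_insert_of_notMem ht'A]
          omega
        · intro a ha
          rcases Finset.mem_insert.mp ha with rfl | ha'
          · exact Finset.subset_union_right
          · exact (hAY a ha').trans Finset.subset_union_left
        · have hUlt : U.card < (U ∪ Y t').card := by
            apply Finset.card_lt_card
            constructor
            · exact Finset.subset_union_left
            · intro hsub
              exact hi (hsub (Finset.mem_union_right _ hit'))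
          omega
        · exact ⟨jj, Finset.mem_union_left _ hjj⟩
        · have hb := blob t' (Y t') (fun c hc => (hYmem t' c).mp hc)
          obtain ⟨sj, hsj⟩ := cne jj
          have hshare : ((((⋃ c ∈ U, cset c) ∪ ↑A)) ∩ ({t'} ∪ ⋃ c ∈ Y t', cset c)).Nonempty := by
            refine ⟨sj, ?_, ?_⟩
            · left
              exact Set.mem_biUnion hjj hsj
            · right
              exact Set.mem_biUnion hjjt' hsj
          have hun := union_conn hconn hb hshare
          have hset : (((⋃ c ∈ U, cset c) ∪ ↑A) ∪ ({t'} ∪ ⋃ c ∈ Y t', cset c)) =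
              ((⋃ c ∈ U ∪ Y t', cset c) ∪ ↑(insert t' A)) := by
            rw [Finset.set_biUnion_union, Finset.coe_insert, Set.insert_eq]
            ext z
            simp only [Set.mem_union, Set.mem_singleton_iff]
            tauto
          rwa [hset] at hun
  -- selection of the hitting family J
  obtain ⟨J, hJ2, hJk, hJY⟩ : ∃ J : Finset Γs.ConnectedComponent, 2 ≤ J.card ∧
      J.card + r ≤ k + 1 ∧ ∀ t, t ∈ (↑T : Set V) → t ∉ SS → ¬ J ⊆ Y t := by
    by_cases hmr : m + r ≤ k + 1
    · refine ⟨Finset.univ, ?_, ?_, ?_⟩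
      · rw [Finset.card_univ]; exact hm2
      · rw [Finset.card_univ]; exact hmr
      · intro t htT htS hsub
        exact hYuniv t htS (Finset.univ_subset_iff.mp hsub)
    · by_cases hcov : ∀ c c', c ≠ c' →
          ∃ t'', (t'' ∈ (↑T : Set V) ∧ t'' ∉ SS) ∧ c ∈ Y t'' ∧ c' ∈ Y t''
      · have hYb : ∀ t, t ∈ (↑T : Set V) → t ∉ SS →
            (Y t).card + r ≤ m ∨ (Y t).card = 0 := by
          intro t htT htS
          rcases Finset.eq_empty_or_nonempty (Y t) with hYe | hYne
          · right; rw [hYe]; simp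
          · left
            obtain ⟨A, U, hAT, hAcard, hAY, hUcard, hUne2, hconn⟩ :=
              chain t htT htS hYne hcov (r - 1) (by omega)
            by_cases hUuniv : U = Finset.univ
            · exfalso
              apply hfalse A (by omega)
              have hUS : (⋃ c ∈ U, cset c) = SS := by rw [hUuniv, hbigU]
              rwa [hUS] at hconn
            · have hUm : U.card < m := by
                have := Finset.card_lt_card (Finset.ssubset_univ_iff.mpr hUuniv)
                rwa [Finset.card_univ] at this
              omega
        obtain ⟨J, hJu, hJcard⟩ := Finset.exists_subset_card_eq
          (s := (Finset.univ : Finset Γs.ConnectedComponent)) (n := k + 1 - r)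
          (by rw [Finset.card_univ]; omega)
        refine ⟨J, by omega, by omega, ?_⟩
        intro t htT htS hsub
        have h1 := Finset.card_le_card hsub
        rcases hYb t htT htS with h2 | h2 <;> omega
      · push_neg at hcov
        obtain ⟨c, c', hne, hnc⟩ := hcov
        refine ⟨{c, c'}, ?_, ?_, ?_⟩
        · rw [Finset.card_insert_of_notMem (by simpa using hne), Finset.card_singleton]
        · rw [Finset.card_insert_of_notMem (by simpa using hne), Finset.card_singleton]
          omega
        · intro t htT htS hsub
          have hc1 : c ∈ Y t := hsub (Finset.mem_insert_self _ _)
          have hc2 : c' ∈ Y t := hsub (by simp)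
          exact hnc t ⟨htT, htS⟩ hc1 hc2
  -- representatives
  set rep : Γs.ConnectedComponent → V := fun c => (cne c).choose with hrepdef
  have hrepmem : ∀ c, rep c ∈ cset c := fun c => (cne c).choose_spec
  have hrepS : ∀ c, rep c ∈ SS := fun c => csub c (hrepmem c)
  have hrepinj : ∀ c c', rep c = rep c' → c = c' := by
    intro c c' h
    exact cuniq (hrepmem c) (h ▸ hrepmem c')
  have hcadj : ∀ c c', c ≠ c' → Gᶜ.Adj (rep c) (rep c') := by
    intro c c' hnecc
    rw [SimpleGraph.compl_adj]
    refine ⟨fun h => hnecc (hrepinj _ _ h), fun hadj => ?_⟩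
    obtain ⟨h1, hc1⟩ := hrepmem c
    obtain ⟨h2, hc2⟩ := hrepmem c'
    have hadj2 : Γs.Adj ⟨rep c, h1⟩ ⟨rep c', h2⟩ := hadj
    have hmkeq := SimpleGraph.ConnectedComponent.sound hadj2.reachable
    exact hnecc (by rw [← hc1, ← hc2, hmkeq])
  obtain ⟨c0, hc0⟩ : J.Nonempty := Finset.card_pos.mp (by omega)
  set X : Finset V := J.image rep with hX
  set W : Set V := ↑T ∪ ↑X with hW
  have hbW : rep c0 ∈ W := Or.inr (Finset.mem_coe.mpr (Finset.mem_image_of_mem rep hc0))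
  have hrepb : ∀ c ∈ J, ∃ q : Gᶜ.Walk (rep c) (rep c0), ∀ z ∈ q.support, z ∈ W := by
    intro c hc
    by_cases hcc : c = c0
    · subst hcc
      refine ⟨SimpleGraph.Walk.nil, ?_⟩
      intro z hz
      simp only [SimpleGraph.Walk.support_nil, List.mem_singleton] at hz
      subst hz
      exact Or.inr (Finset.mem_coe.mpr (Finset.mem_image_of_mem rep hc))
    · refine ⟨SimpleGraph.Walk.cons (hcadj c c0 hcc) SimpleGraph.Walk.nil, ?_⟩
      intro z hz
      simp only [SimpleGraph.Walk.support_cons, SimpleGraph.Walk.support_nil,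
        List.mem_cons, List.mem_singleton] at hz
      rcases hz with rfl | hz
      · exact Or.inr (Finset.mem_coe.mpr (Finset.mem_image_of_mem rep hc))
      · rcases hz with rfl | h
        · exact hbW
        · simp at h
  have hWconn : ((⊤ : Gᶜ.Subgraph).induce W).Connected := by
    apply induce_conn_base Gᶜ W (rep c0) hbW
    intro x hx
    have hattach : ∀ c ∈ J, Gᶜ.Adj x (rep c) → ∃ p : Gᶜ.Walk x (rep c0),
        ∀ z ∈ p.support, z ∈ W := by
      intro c hcJ hadj
      obtain ⟨q, hq⟩ := hrepb c hcJ
      refine ⟨SimpleGraph.Walk.cons hadj q, ?_⟩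
      intro z hz
      rw [SimpleGraph.Walk.support_cons, List.mem_cons] at hz
      rcases hz with rfl | hz
      · exact hx
      · exact hq z hz
    rcases hx with hxT | hxX
    · by_cases hxS : x ∈ SS
      · set cx := Γs.connectedComponentMk ⟨x, hxS⟩ with hcx
        obtain ⟨c, hcJ, hccx⟩ := Finset.exists_mem_ne (s := J) (by omega) cx
        apply hattach c hcJ
        rw [SimpleGraph.compl_adj]
        constructor
        · intro h
          exact hccx (cuniq (h ▸ hmemc x hxS) (hrepmem c)).symm
        · intro hadj
          obtain ⟨h2, hc2⟩ := hrepmem c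
          have hadj2 : Γs.Adj ⟨x, hxS⟩ ⟨rep c, h2⟩ := hadj
          have hmkeq := SimpleGraph.ConnectedComponent.sound hadj2.reachable
          exact hccx (by rw [← hc2, ← hmkeq])
      · obtain ⟨c, hcJ, hcY⟩ : ∃ c ∈ J, c ∉ Y x := by
          by_contra hcon
          push_neg at hcon
          exact hJY x hxT hxS (fun c hc => hcon c hc)
        apply hattach c hcJ
        rw [SimpleGraph.compl_adj]
        constructor
        · intro h
          exact hxS (h ▸ hrepS c)
        · intro hadj
          exact hcY ((hYmem x c).mpr ⟨rep c, hrepmem c, hadj⟩)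
    · obtain ⟨c, hcJ, rfl⟩ := Finset.mem_image.mp (Finset.mem_coe.mp hxX)
      exact hrepb c hcJ
  refine ⟨W, Set.subset_union_left, ?_, hWconn⟩
  have hWeq : W = ↑(T ∪ X) := by rw [Finset.coe_union]
  rw [hWeq, Set.ncard_coe_finset]
  have h1 := Finset.card_union_le T X
  have h2 : X.card ≤ J.card := Finset.card_image_le
  omega

private lemma main2 [Fintype V] (G : SimpleGraph V) (k : ℕ) (hk : 3 ≤ k)
    (S T : Finset V) (hS : S.card = k) (hT : T.card = k)
    (hP : ∀ W : Set V, ↑S ⊆ W → ((⊤ : G.Subgraph).induce W).Connected → 2 * k + 1 ≤ W.ncard) :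
    ∃ W : Set V, ↑T ⊆ W ∧ W.ncard ≤ k + 1 ∧
      ((⊤ : Gᶜ.Subgraph).induce W).Connected := by
  classical
  by_cases h1 : ((⊤ : Gᶜ.Subgraph).induce (↑T : Set V)).Connected
  · exact ⟨↑T, subset_rfl, by rw [Set.ncard_coe_finset, hT]; omega, h1⟩
  by_cases h2 : ∃ v : V, v ∉ T ∧ ∀ t ∈ T, ¬ G.Adj v t
  · obtain ⟨v, hvT, hv⟩ := h2
    refine ⟨insert v ↑T, (Set.subset_insert _ _), ?_, ?_⟩
    · rw [← Finset.coe_insert, Set.ncard_coe_finset,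
        Finset.card_insert_of_notMem hvT, hT]
    · apply induce_conn_base Gᶜ _ v (Set.mem_insert _ _)
      intro x hx
      rcases hx with rfl | hxT
      · exact ⟨SimpleGraph.Walk.nil, by simp⟩
      · have hadj : Gᶜ.Adj x v := by
          rw [SimpleGraph.compl_adj]
          constructor
          · intro h
            exact hvT (by rwa [h] at hxT)
          · intro h
            exact hv x hxT h.symm
        refine ⟨SimpleGraph.Walk.cons hadj SimpleGraph.Walk.nil, ?_⟩
        intro z hz
        simp only [SimpleGraph.Walk.support_cons, SimpleGraph.Walk.support_nil,
          List.mem_cons, List.mem_singleton] at hz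
        rcases hz with rfl | hz
        · exact Set.mem_insert_iff.mpr (Or.inr hxT)
        · rcases hz with rfl | h
          · exact Set.mem_insert _ _
          · simp at h
  · exfalso
    push_neg at h2
    have hTne : (↑T : Set V).Nonempty := by
      rw [Finset.coe_nonempty, ← Finset.card_pos, hT]; omega
    obtain ⟨t0, ht0⟩ := hTne
    set C : Set V := {x | ∃ hx : x ∈ (↑T : Set V),
      ((⊤ : Gᶜ.Subgraph).induce (↑T : Set V)).coe.Reachable ⟨t0, ht0⟩ ⟨x, hx⟩} with hC
    have ht0C : t0 ∈ C := ⟨ht0, .refl _⟩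
    have hCT : C ⊆ ↑T := fun x hx => hx.1
    obtain ⟨t2, ht2T, ht2C⟩ : ∃ t2, t2 ∈ (↑T : Set V) ∧ t2 ∉ C := by
      by_contra hcon
      push_neg at hcon
      apply h1
      rw [Subgraph.connected_iff]
      refine ⟨⟨?_⟩, ⟨t0, ht0⟩⟩
      rintro ⟨x, hx⟩ ⟨y, hy⟩
      obtain ⟨hx', hxr⟩ := hcon x hx
      obtain ⟨hy', hyr⟩ := hcon y hy
      exact hxr.symm.trans hyr
    have hbip : ∀ x ∈ C, ∀ y ∈ (↑T : Set V), y ∉ C → G.Adj x y := by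
      intro x hx y hyT hyC
      have hxy : x ≠ y := fun h => hyC (h ▸ hx)
      by_contra hnadj
      apply hyC
      refine ⟨hyT, ?_⟩
      refine hx.2.trans (SimpleGraph.Adj.reachable ?_)
      simp only [Subgraph.coe_adj, Subgraph.induce_adj, Subgraph.top_adj]
      exact ⟨hCT hx, hyT, hxy, hnadj⟩
    have hconn : ((⊤ : G.Subgraph).induce (↑S ∪ ↑T)).Connected := by
      apply induce_conn_base G _ t2 (Or.inr ht2T)
      intro x hx
      have hedge02 : G.Adj t0 t2 := hbip t0 ht0C t2 ht2T ht2C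
      by_cases hxC : x ∈ C
      · refine ⟨SimpleGraph.Walk.cons (hbip x hxC t2 ht2T ht2C) SimpleGraph.Walk.nil, ?_⟩
        intro z hz
        simp only [SimpleGraph.Walk.support_cons, SimpleGraph.Walk.support_nil,
          List.mem_cons, List.mem_singleton] at hz
        rcases hz with rfl | hz
        · exact Or.inr (hCT hxC)
        · rcases hz with rfl | h
          · exact Or.inr ht2T
          · simp at h
      · by_cases hxT : x ∈ (↑T : Set V)
        · refine ⟨SimpleGraph.Walk.cons ((hbip t0 ht0C x hxT hxC).symm)
            (SimpleGraph.Walk.cons hedge02 SimpleGraph.Walk.nil), ?_⟩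
          intro z hz
          simp only [SimpleGraph.Walk.support_cons, SimpleGraph.Walk.support_nil,
            List.mem_cons, List.mem_singleton] at hz
          rcases hz with rfl | rfl | rfl | h
          · exact Or.inr hxT
          · exact Or.inr (hCT ht0C)
          · exact Or.inr ht2T
          · simp at h
        · -- x ∈ S \ T : use a neighbor in T
          have hxT' : x ∉ T := fun h => hxT (Finset.mem_coe.mpr h)
          obtain ⟨t, htT, ht⟩ := h2 x hxT'
          have htadj : G.Adj x t := ht
          by_cases htC : t ∈ C
          · refine ⟨SimpleGraph.Walk.cons htadj
              (SimpleGraph.Walk.cons (hbip t htC t2 ht2T ht2C) SimpleGraph.Walk.nil), ?_⟩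
            intro z hz
            simp only [SimpleGraph.Walk.support_cons, SimpleGraph.Walk.support_nil,
              List.mem_cons, List.mem_singleton] at hz
            rcases hz with rfl | rfl | rfl | h
            · exact hx
            · exact Or.inr (Finset.mem_coe.mpr htT)
            · exact Or.inr ht2T
            · simp at h
          · refine ⟨SimpleGraph.Walk.cons htadj (SimpleGraph.Walk.cons
              ((hbip t0 ht0C t (Finset.mem_coe.mpr htT) htC).symm)
              (SimpleGraph.Walk.cons hedge02 SimpleGraph.Walk.nil)), ?_⟩
            intro z hz
            simp only [SimpleGraph.Walk.support_cons, SimpleGraph.Walk.support_nil,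
              List.mem_cons, List.mem_singleton] at hz
            rcases hz with rfl | rfl | rfl | rfl | h
            · exact hx
            · exact Or.inr (Finset.mem_coe.mpr htT)
            · exact Or.inr (hCT ht0C)
            · exact Or.inr ht2T
            · simp at h
    have hbig := hP (↑S ∪ ↑T) Set.subset_union_left hconn
    have hsmall : (↑S ∪ ↑T : Set V).ncard ≤ 2 * k := by
      rw [← Finset.coe_union, Set.ncard_coe_finset]
      have := Finset.card_union_le S T
      omega
    omega

theorem stmt_13 [Fintype V] (G : SimpleGraph V)
    (hG : G.Connected) (hGc : Gᶜ.Connected)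
    (k : ℕ) (hk : 3 ≤ k) (hk' : k ≤ Fintype.card V) :
    (∀ r : ℕ, 1 ≤ r → r ≤ k - 1 → k + r ≤ steinerDiam G k →
        steinerDiam Gᶜ k ≤ 2 * k - r) ∧
    (2 * k ≤ steinerDiam G k → steinerDiam Gᶜ k ≤ k) := by
  constructor
  · intro r hr hrk hsd
    obtain ⟨S, hSmem, hSd⟩ := sup_extract (by omega) hsd
    have hScard : S.card = k := (Finset.mem_powersetCard.mp hSmem).2
    have hP : ∀ W : Set V, ↑S ⊆ W → ((⊤ : G.Subgraph).induce W).Connected →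
        k + r + 1 ≤ W.ncard := by
      intro W hSW hWc
      have := steinerDist_add_one_le G hSW hWc
      omega
    apply Finset.sup_le
    intro T hTmem
    have hTcard : T.card = k := (Finset.mem_powersetCard.mp hTmem).2
    obtain ⟨W, hTW, hWcard, hWc⟩ := main1 G k r hk hr (by omega) S T hScard hTcard hP
    have := steinerDist_add_one_le Gᶜ hTW hWc
    omega
  · intro hsd
    obtain ⟨S, hSmem, hSd⟩ := sup_extract (by omega) hsd
    have hScard : S.card = k := (Finset.mem_powersetCard.mp hSmem).2
    have hP : ∀ W : Set V, ↑S ⊆ W → ((⊤ : G.Subgraph).induce W).Connected →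
        2 * k + 1 ≤ W.ncard := by
      intro W hSW hWc
      have := steinerDist_add_one_le G hSW hWc
      omega
    apply Finset.sup_le
    intro T hTmem
    have hTcard : T.card = k := (Finset.mem_powersetCard.mp hTmem).2
    obtain ⟨W, hTW, hWcard, hWc⟩ := main2 G k hk S T hScard hTcard hP
    have := steinerDist_add_one_le Gᶜ hTW hWc
    omega
end

section
/- Let G and H be connected graphs, and let S = {(u₁,v₁), …, (u_k,v_k)} be a set of k ≥ 2 distinct vertices of the Cartesian product G □ H. With S_G = {u₁,…,u_k} (as a set of vertices of G) and S_H = {v₁,…,v_k} (as a set of vertices of H), the Steiner distance satisfies d_{G□H}(S) ≥ d_G(S_G) + d_H(S_H). -/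
open SimpleGraph Finset

variable {V : Type*}

section aux

variable {W : Type*} (G : SimpleGraph V) (H : SimpleGraph W)

/-- Projection of a subgraph of a box product onto the first factor. -/
def projG (T : (G.boxProd H).Subgraph) : G.Subgraph where
  verts := Prod.fst '' T.verts
  Adj u u' := ∃ w, T.Adj (u, w) (u', w)
  adj_sub := by
    rintro u u' ⟨w, h⟩
    have := T.adj_sub h
    rw [boxProd_adj] at this
    rcases this with ⟨h1, _⟩ | ⟨h2, _⟩
    · exact h1
    · exact absurd h2 (H.irrefl)
  edge_vert := by
    rintro u u' ⟨w, h⟩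
    exact ⟨(u, w), T.edge_vert h, rfl⟩
  symm := by
    constructor
    rintro u u' ⟨w, h⟩
    exact ⟨w, h.symm⟩

/-- Projection of a subgraph of a box product onto the second factor. -/
def projH (T : (G.boxProd H).Subgraph) : H.Subgraph where
  verts := Prod.snd '' T.verts
  Adj w w' := ∃ u, T.Adj (u, w) (u, w')
  adj_sub := by
    rintro w w' ⟨u, h⟩
    have := T.adj_sub h
    rw [boxProd_adj] at this
    rcases this with ⟨h1, _⟩ | ⟨h2, _⟩
    · exact absurd h1 (G.irrefl)
    · exact h2
  edge_vert := by
    rintro w w' ⟨u, h⟩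
    exact ⟨(u, w), T.edge_vert h, rfl⟩
  symm := by
    constructor
    rintro w w' ⟨u, h⟩
    exact ⟨u, h.symm⟩

variable {G H}

lemma projG_connected {T : (G.boxProd H).Subgraph} (hT : T.Connected) :
    (projG G H T).Connected := by
  rw [SimpleGraph.Subgraph.connected_iff]
  obtain ⟨x, hx⟩ := hT.nonempty
  refine ⟨⟨?_⟩, ⟨x.1, x, hx, rfl⟩⟩
  rintro ⟨u, p, hp, rfl⟩ ⟨u', q, hq, rfl⟩
  have key : ∀ (a b : T.verts), T.coe.Reachable a b →
      (projG G H T).coe.Reachable ⟨a.1.1, a.1, a.2, rfl⟩ ⟨b.1.1, b.1, b.2, rfl⟩ := by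
    rintro a b ⟨w⟩
    induction w with
    | nil => exact Reachable.refl _
    | cons hac w ih =>
      rename_i a c b
      have hadj : T.Adj a.1 c.1 := hac
      have := T.adj_sub hadj
      rw [boxProd_adj] at this
      rcases this with ⟨_, h2⟩ | ⟨_, h1⟩
      · refine Reachable.trans ?_ ih
        apply SimpleGraph.Adj.reachable
        show (projG G H T).Adj a.1.1 c.1.1
        refine ⟨a.1.2, ?_⟩
        have : (a.1.1, a.1.2) = a.1 := rfl
        rw [this, h2]
        have : (c.1.1, c.1.2) = c.1 := rfl
        rw [this]
        exact hadj
      · have : (⟨a.1.1, a.1, a.2, rfl⟩ : (projG G H T).verts) = ⟨c.1.1, c.1, c.2, rfl⟩ :=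
          Subtype.ext h1
        rw [this]
        exact ih
  exact key ⟨p, hp⟩ ⟨q, hq⟩ (hT.preconnected.coe _ _)

lemma projH_connected {T : (G.boxProd H).Subgraph} (hT : T.Connected) :
    (projH G H T).Connected := by
  rw [SimpleGraph.Subgraph.connected_iff]
  obtain ⟨x, hx⟩ := hT.nonempty
  refine ⟨⟨?_⟩, ⟨x.2, x, hx, rfl⟩⟩
  rintro ⟨u, p, hp, rfl⟩ ⟨u', q, hq, rfl⟩
  have key : ∀ (a b : T.verts), T.coe.Reachable a b →
      (projH G H T).coe.Reachable ⟨a.1.2, a.1, a.2, rfl⟩ ⟨b.1.2, b.1, b.2, rfl⟩ := by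
    rintro a b ⟨w⟩
    induction w with
    | nil => exact Reachable.refl _
    | cons hac w ih =>
      rename_i a c b
      have hadj : T.Adj a.1 c.1 := hac
      have := T.adj_sub hadj
      rw [boxProd_adj] at this
      rcases this with ⟨_, h2⟩ | ⟨_, h1⟩
      · have : (⟨a.1.2, a.1, a.2, rfl⟩ : (projH G H T).verts) = ⟨c.1.2, c.1, c.2, rfl⟩ :=
          Subtype.ext h2
        rw [this]
        exact ih
      · refine Reachable.trans ?_ ih
        apply SimpleGraph.Adj.reachable
        show (projH G H T).Adj a.1.2 c.1.2
        refine ⟨a.1.1, ?_⟩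
        have : (a.1.1, a.1.2) = a.1 := rfl
        rw [this, h1]
        have : (c.1.1, c.1.2) = c.1 := rfl
        rw [this]
        exact hadj
  exact key ⟨p, hp⟩ ⟨q, hq⟩ (hT.preconnected.coe _ _)

lemma edge_count {T : (G.boxProd H).Subgraph} [Fintype V] [Fintype W] :
    (projG G H T).edgeSet.ncard + (projH G H T).edgeSet.ncard ≤ T.edgeSet.ncard := by
  classical
  set SG : Set (Sym2 (V × W)) := {e ∈ T.edgeSet | (e.map Prod.snd).IsDiag} with hSG
  set SH : Set (Sym2 (V × W)) := {e ∈ T.edgeSet | (e.map Prod.fst).IsDiag} with hSH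
  have hG1 : (projG G H T).edgeSet ⊆ Sym2.map Prod.fst '' SG := by
    intro e he
    induction e with
    | h u u' =>
      obtain ⟨w, h⟩ := he
      exact ⟨s((u, w), (u', w)), ⟨h, by simp⟩, by simp⟩
  have hH1 : (projH G H T).edgeSet ⊆ Sym2.map Prod.snd '' SH := by
    intro e he
    induction e with
    | h w w' =>
      obtain ⟨u, h⟩ := he
      exact ⟨s((u, w), (u, w')), ⟨h, by simp⟩, by simp⟩
  have hdisj : Disjoint SG SH := by
    rw [Set.disjoint_left]
    rintro e ⟨he, h2⟩ ⟨_, h1⟩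
    induction e with
    | h p q =>
      simp only [Sym2.map_pair_eq, Sym2.isDiag_iff_proj_eq] at h1 h2
      have : T.Adj p q := he
      exact (this.ne) (Prod.ext h1 h2)
  have hunion : SG ∪ SH = T.edgeSet := by
    apply Set.Subset.antisymm
    · rintro e (⟨he, _⟩ | ⟨he, _⟩) <;> exact he
    · intro e he
      induction e with
      | h p q =>
        have hadj : T.Adj p q := he
        have := T.adj_sub hadj
        rw [boxProd_adj] at this
        rcases this with ⟨_, h2⟩ | ⟨_, h1⟩
        · exact Or.inl ⟨he, by simp [h2]⟩
        · exact Or.inr ⟨he, by simp [h1]⟩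
  calc (projG G H T).edgeSet.ncard + (projH G H T).edgeSet.ncard
      ≤ (Sym2.map Prod.fst '' SG).ncard + (Sym2.map Prod.snd '' SH).ncard := by
        exact add_le_add (Set.ncard_le_ncard hG1 (Set.toFinite _))
          (Set.ncard_le_ncard hH1 (Set.toFinite _))
    _ ≤ SG.ncard + SH.ncard := by
        exact add_le_add (Set.ncard_image_le (Set.toFinite _))
          (Set.ncard_image_le (Set.toFinite _))
    _ = T.edgeSet.ncard := by
        rw [← Set.ncard_union_eq hdisj (Set.toFinite _) (Set.toFinite _), hunion]

end aux

theorem stmt_14 {W : Type*} [Fintype V] [Fintype W] [DecidableEq V] [DecidableEq W]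
    (G : SimpleGraph V) (H : SimpleGraph W)
    (hG : G.Connected) (hH : H.Connected)
    (k : ℕ) (hk : 2 ≤ k) (S : Finset (V × W)) (hS : S.card = k) :
    steinerDist G (↑(S.image Prod.fst)) + steinerDist H (↑(S.image Prod.snd)) ≤
      steinerDist (G.boxProd H) (↑S) := by
  have hne : {n | ∃ T : (G.boxProd H).Subgraph, T.Connected ∧ ↑S ⊆ T.verts ∧
      T.edgeSet.ncard = n}.Nonempty := by
    refine ⟨(⊤ : (G.boxProd H).Subgraph).edgeSet.ncard, ⊤, ?_, by simp, rfl⟩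
    rw [SimpleGraph.Subgraph.connected_iff']
    exact (Subgraph.topIso (G := G.boxProd H)).symm.connected_iff.mp (hG.boxProd hH)
  obtain ⟨T, hTc, hTS, hTn⟩ := Nat.sInf_mem hne
  have h1 : steinerDist G (↑(S.image Prod.fst)) ≤ (projG G H T).edgeSet.ncard := by
    apply Nat.sInf_le
    refine ⟨projG G H T, projG_connected hTc, ?_, rfl⟩
    intro u hu
    simp only [coe_image, Set.mem_image, mem_coe] at hu
    obtain ⟨p, hp, rfl⟩ := hu
    exact ⟨p, hTS hp, rfl⟩
  have h2 : steinerDist H (↑(S.image Prod.snd)) ≤ (projH G H T).edgeSet.ncard := by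
    apply Nat.sInf_le
    refine ⟨projH G H T, projH_connected hTc, ?_, rfl⟩
    intro w hw
    simp only [coe_image, Set.mem_image, mem_coe] at hw
    obtain ⟨p, hp, rfl⟩ := hw
    exact ⟨p, hTS hp, rfl⟩
  calc steinerDist G (↑(S.image Prod.fst)) + steinerDist H (↑(S.image Prod.snd))
      ≤ (projG G H T).edgeSet.ncard + (projH G H T).edgeSet.ncard := by gcongr
    _ ≤ T.edgeSet.ncard := edge_count
    _ = steinerDist (G.boxProd H) (↑S) := hTn
end

section
/- Let T be a tree of order n and k an integer with 2 ≤ k ≤ n. Then SW_k(T) = Σ_{e ∈ E(T)} Σ_{i=1}^{k−1} C(n₁(e), i) · C(n₂(e), k−i), where for an edge e of T, n₁(e) and n₂(e) are the orders of the two components of T − e. -/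
open SimpleGraph Finset

variable {V : Type*}

/-- The `k`-th Steiner Wiener index: the sum of the Steiner distances of all
`k`-element vertex subsets. -/
noncomputable def steinerWiener [Fintype V] (G : SimpleGraph V) (k : ℕ) : ℕ :=
  ∑ S ∈ Finset.powersetCard k (Finset.univ : Finset V), steinerDist G (↑S)


/-- In a tree, an edge lies on a path iff its endpoints are separated by removing it. -/
lemma tree_edge_mem_path_iff [DecidableEq V] {T : SimpleGraph V} (hT : T.IsTree) {x y : V} (e : Sym2 V)
    {p : T.Walk x y} (hp : p.IsPath) :
    e ∈ p.edges ↔ ¬ (T.deleteEdges {e}).Reachable x y := by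
  constructor
  · rintro hep ⟨q⟩
    have hq : ((q.toPath : (T.deleteEdges {e}).Walk x y).mapLe
        (T.deleteEdges_le {e})).IsPath := (q.toPath.2).mapLe _
    have huniq := hT.IsAcyclic.path_unique ⟨p, hp⟩ ⟨_, hq⟩
    have hpe : p = (q.toPath : (T.deleteEdges {e}).Walk x y).mapLe (T.deleteEdges_le {e}) :=
      congrArg Subtype.val huniq
    rw [hpe] at hep
    simp only [Walk.mapLe, Walk.edges_map, List.mem_map] at hep
    obtain ⟨e', he', heq⟩ := hep
    have hid : ⇑(Hom.ofLE (T.deleteEdges_le {e})) = id := rfl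
    rw [hid, Sym2.map_id, id] at heq
    subst heq
    have := Walk.edges_subset_edgeSet _ he'
    rw [edgeSet_deleteEdges] at this
    exact this.2 rfl
  · intro h
    by_contra hne
    exact h ⟨p.toDeleteEdges {e} (fun e' he' => by
      simp only [Set.mem_singleton_iff]
      rintro rfl; exact hne he')⟩

/-- From a connected subgraph containing two vertices, extract a walk whose edges are
in the subgraph. -/
lemma subgraph_exists_walk {T : SimpleGraph V} {H : T.Subgraph} (hH : H.Connected)
    {x y : V} (hx : x ∈ H.verts) (hy : y ∈ H.verts) :
    ∃ p : T.Walk x y, ∀ e ∈ p.edges, e ∈ H.edgeSet := by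
  obtain ⟨w⟩ := hH ⟨x, hx⟩ ⟨y, hy⟩
  refine ⟨w.map H.hom, ?_⟩
  intro e he
  replace he : e ∈ (Walk.map H.hom w).edges := he
  rw [Walk.edges_map, List.mem_map] at he
  obtain ⟨e', he', rfl⟩ := he
  induction e' using Sym2.ind with
  | _ a b =>
    have hadj : H.coe.Adj a b := w.adj_of_mem_edges he'
    rw [Subgraph.coe_adj] at hadj
    exact hadj

lemma cover_aux {T : SimpleGraph V} {u v : V} {a b : V} (p : T.Walk a b)
    (h : (T.deleteEdges {s(u,v)}).Reachable u a ∨ (T.deleteEdges {s(u,v)}).Reachable v a) :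
    (T.deleteEdges {s(u,v)}).Reachable u b ∨ (T.deleteEdges {s(u,v)}).Reachable v b := by
  induction p with
  | nil => exact h
  | @cons a c b hadj q ih =>
    apply ih
    by_cases hac : s(a, c) = s(u, v)
    · rw [Sym2.eq_iff] at hac
      rcases hac with ⟨rfl, rfl⟩ | ⟨rfl, rfl⟩
      · exact Or.inr (Reachable.refl _)
      · exact Or.inl (Reachable.refl _)
    · have hadj' : (T.deleteEdges {s(u,v)}).Adj a c := by
        rw [deleteEdges_adj]
        exact ⟨hadj, by simpa using hac⟩
      rcases h with h | h
      · exact Or.inl (h.trans hadj'.reachable)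
      · exact Or.inr (h.trans hadj'.reachable)

lemma edgeSet_sup' {α : Type*} {G : SimpleGraph V} (S : Finset α) (hS : S.Nonempty)
    (f : α → G.Subgraph) :
    (S.sup' hS f).edgeSet = ⋃ s ∈ S, (f s).edgeSet := by
  rw [Finset.sup'_eq_sup, Finset.sup_eq_iSup]
  rw [Subgraph.edgeSet_iSup]
  refine Set.iUnion_congr fun s => ?_
  rw [Subgraph.edgeSet_iSup]

lemma steinerDist_tree [Fintype V] [DecidableEq V] {T : SimpleGraph V} [DecidableRel T.Adj]
    (hT : T.IsTree) (S : Finset V) (hS : S.Nonempty)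
    [DecidablePred fun e => ∃ x ∈ S, ∃ y ∈ S, ¬ (T.deleteEdges {e}).Reachable x y] :
    steinerDist T ↑S =
      (T.edgeFinset.filter
        (fun e => ∃ x ∈ S, ∃ y ∈ S, ¬ (T.deleteEdges {e}).Reachable x y)).card := by
  obtain ⟨s₀, hs₀⟩ := hS
  -- choose paths from s₀
  have hw : ∀ s : V, ∃ p : T.Walk s₀ s, p.IsPath := fun s => by
    obtain ⟨q⟩ := hT.isConnected.preconnected s₀ s
    exact ⟨q.toPath, q.toPath.2⟩
  choose p hp using hw
  set P : Sym2 V → Prop :=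
    fun e => ∃ x ∈ S, ∃ y ∈ S, ¬ (T.deleteEdges {e}).Reachable x y with hP
  -- P is equivalent to separation from s₀
  have hPiff : ∀ e : Sym2 V, P e ↔ ∃ s ∈ S, ¬ (T.deleteEdges {e}).Reachable s₀ s := by
    intro e
    constructor
    · rintro ⟨x, hx, y, hy, hxy⟩
      by_cases h1 : (T.deleteEdges {e}).Reachable s₀ x
      · by_cases h2 : (T.deleteEdges {e}).Reachable s₀ y
        · exact absurd (h1.symm.trans h2) hxy
        · exact ⟨y, hy, h2⟩
      · exact ⟨x, hx, h1⟩
    · rintro ⟨s, hs, hns⟩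
      exact ⟨s₀, hs₀, s, hs, hns⟩
  -- the candidate subgraph
  set H : T.Subgraph := S.sup' ⟨s₀, hs₀⟩ (fun s => (p s).toSubgraph) with hH
  have hHconn : H.Connected ∧ s₀ ∈ H.verts := by
    rw [hH]
    exact Finset.sup'_induction (p := fun K : T.Subgraph => K.Connected ∧ s₀ ∈ K.verts) _ _
      (fun a ha b hb => ⟨Subgraph.connected_sup ha.1.preconnected hb.1.preconnected ⟨s₀, ha.2, hb.2⟩, Or.inl ha.2⟩)
      (fun s _ => ⟨(p s).toSubgraph_connected, (p s).start_mem_verts_toSubgraph⟩)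
  have hHverts : (↑S : Set V) ⊆ H.verts := by
    intro s hs
    have hle := Finset.le_sup' (fun s => (p s).toSubgraph) hs
    rw [← hH] at hle
    exact hle.1 ((p s).end_mem_verts_toSubgraph)
  have hHedge : H.edgeSet = {e | e ∈ T.edgeSet ∧ P e} := by
    rw [hH]
    refine (edgeSet_sup' S ⟨s₀, hs₀⟩ _).trans ?_
    ext e
    simp only [Set.mem_iUnion, Walk.mem_edges_toSubgraph, Set.mem_setOf_eq, hPiff e]
    constructor
    · rintro ⟨s, hs, he⟩
      exact ⟨Walk.edges_subset_edgeSet _ he, s, hs,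
        (tree_edge_mem_path_iff hT e (hp s)).1 he⟩
    · rintro ⟨-, s, hs, hns⟩
      exact ⟨s, hs, (tree_edge_mem_path_iff hT e (hp s)).2 hns⟩
  rw [← Set.ncard_coe_finset]
  suffices hsuf : steinerDist T ↑S = {e | e ∈ T.edgeSet ∧ P e}.ncard by
    rw [hsuf]
    congr 1
    ext e
    simp [mem_edgeFinset, hP]
  have hcard : H.edgeSet.ncard = {e | e ∈ T.edgeSet ∧ P e}.ncard := by rw [hHedge]
  apply le_antisymm
  · exact Nat.sInf_le ⟨H, hHconn.1, hHverts, hcard⟩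
  · refine le_csInf ⟨_, H, hHconn.1, hHverts, hcard⟩ ?_
    rintro m ⟨K, hKconn, hKverts, rfl⟩
    apply Set.ncard_le_ncard _ K.edgeSet.toFinite
    intro e he
    rw [Set.mem_setOf_eq] at he
    obtain ⟨x, hx, y, hy, hxy⟩ := he.2
    obtain ⟨w, hwE⟩ := subgraph_exists_walk hKconn (hKverts hx) (hKverts hy)
    by_cases hew : e ∈ w.edges
    · exact hwE e hew
    · exact absurd ⟨w.toDeleteEdges {e} (fun e' he' => by
        simp only [Set.mem_singleton_iff]; rintro rfl; exact hew he')⟩ hxy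

lemma count_cross [Fintype V] [DecidableEq V] (A B : Finset V) (hU : A ∪ B = univ)
    (hd : Disjoint A B) {k : ℕ}
    [DecidablePred fun S : Finset V => (S ∩ A).Nonempty ∧ (S ∩ B).Nonempty] :
    ((powersetCard k (univ : Finset V)).filter
        (fun S => (S ∩ A).Nonempty ∧ (S ∩ B).Nonempty)).card
      = ∑ i ∈ Ico 1 k, A.card.choose i * B.card.choose (k - i) := by
  have hsplit : ∀ S : Finset V, S ∩ A ∪ S ∩ B = S := fun S => by
    rw [← Finset.inter_union_distrib_left, hU, Finset.inter_univ]
  have hdisj : ∀ S : Finset V, Disjoint (S ∩ A) (S ∩ B) :=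
    fun S => hd.mono (Finset.inter_subset_right) (Finset.inter_subset_right)
  have hcardsum : ∀ S : Finset V, (S ∩ A).card + (S ∩ B).card = S.card := fun S => by
    rw [← Finset.card_union_of_disjoint (hdisj S), hsplit]
  rw [Finset.card_eq_sum_card_fiberwise
    (f := fun S => (S ∩ A).card) (t := Ico 1 k) ?mem]
  case mem =>
    intro S hS
    rw [Finset.mem_coe, Finset.mem_filter, mem_powersetCard_univ] at hS
    obtain ⟨hSk, h1, h2⟩ := hS
    rw [Finset.mem_coe, Finset.mem_Ico]
    constructor
    · exact Finset.card_pos.2 h1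
    · show #(S ∩ A) < k
      have := hcardsum S
      rw [hSk] at this
      have h2' := Finset.card_pos.2 h2
      omega
  refine Finset.sum_congr rfl fun i hi => ?_
  rw [Finset.mem_Ico] at hi
  rw [Finset.filter_filter]
  have hiff : ∀ S ∈ powersetCard k (univ : Finset V),
      ((((S ∩ A).Nonempty ∧ (S ∩ B).Nonempty)) ∧ (S ∩ A).card = i) ↔ ((S ∩ A).card = i) := by
    intro S hS
    rw [mem_powersetCard_univ] at hS
    constructor
    · exact fun h => h.2
    · intro h
      refine ⟨⟨Finset.card_pos.1 (by omega), Finset.card_pos.1 ?_⟩, h⟩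
      have := hcardsum S
      omega
  rw [Finset.filter_congr hiff]
  have hbij : ((powersetCard k (univ : Finset V)).filter (fun S => (S ∩ A).card = i)).card
      = ((powersetCard i A) ×ˢ (powersetCard (k - i) B)).card := by
    apply Finset.card_nbij' (fun S => (S ∩ A, S ∩ B)) (fun P => P.1 ∪ P.2)
    · intro S hS
      rw [Finset.mem_coe, Finset.mem_filter, mem_powersetCard_univ] at hS
      rw [Finset.mem_coe, Finset.mem_product, Finset.mem_powersetCard, Finset.mem_powersetCard]
      have := hcardsum S
      exact ⟨⟨Finset.inter_subset_right, hS.2⟩, ⟨Finset.inter_subset_right,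
        show #(S ∩ B) = k - i by omega⟩⟩
    · intro P hP
      rw [Finset.mem_coe, Finset.mem_product, Finset.mem_powersetCard, Finset.mem_powersetCard] at hP
      rw [Finset.mem_coe, Finset.mem_filter, mem_powersetCard_univ]
      have hPA : P.1 ⊆ A := hP.1.1
      have hPB : P.2 ⊆ B := hP.2.1
      have hdPQ : Disjoint P.1 P.2 := hd.mono hPA hPB
      have h1 : (P.1 ∪ P.2) ∩ A = P.1 := by
        rw [Finset.union_inter_distrib_right,
          Finset.inter_eq_left.2 hPA,
          Finset.disjoint_iff_inter_eq_empty.1 (hd.symm.mono_left hPB), Finset.union_empty]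
      constructor
      · rw [Finset.card_union_of_disjoint hdPQ, hP.1.2, hP.2.2]
        omega
      · rw [h1, hP.1.2]
    · intro S hS
      rw [Finset.mem_coe, Finset.mem_filter] at hS
      exact hsplit S
    · intro P hP
      rw [Finset.mem_coe, Finset.mem_product, Finset.mem_powersetCard, Finset.mem_powersetCard] at hP
      have hPA : P.1 ⊆ A := hP.1.1
      have hPB : P.2 ⊆ B := hP.2.1
      have h1 : (P.1 ∪ P.2) ∩ A = P.1 := by
        rw [Finset.union_inter_distrib_right,
          Finset.inter_eq_left.2 hPA,
          Finset.disjoint_iff_inter_eq_empty.1 (hd.symm.mono_left hPB), Finset.union_empty]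
      have h2 : (P.1 ∪ P.2) ∩ B = P.2 := by
        rw [Finset.union_inter_distrib_right,
          Finset.inter_eq_left.2 hPB,
          Finset.disjoint_iff_inter_eq_empty.1 (hd.mono_left hPA), Finset.empty_union]
      simp only [h1, h2]
  rw [hbij, Finset.card_product, Finset.card_powersetCard, Finset.card_powersetCard]

theorem stmt_17 [Fintype V] [DecidableEq V] (T : SimpleGraph V) [DecidableRel T.Adj]
    (hT : T.IsTree) (k : ℕ) (hk : 2 ≤ k) (hk' : k ≤ Fintype.card V)
    -- `n₁ e` and `n₂ e` are the orders of the two components of `T - e`.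
    (n₁ n₂ : Sym2 V → ℕ)
    (hn : ∀ e ∈ T.edgeSet, ∃ u v, e = s(u, v) ∧
      n₁ e = {w | (T.deleteEdges {s(u, v)}).Reachable u w}.ncard ∧
      n₂ e = {w | (T.deleteEdges {s(u, v)}).Reachable v w}.ncard) :
    steinerWiener T k =
      ∑ e ∈ T.edgeFinset, ∑ i ∈ Finset.Ico 1 k, (n₁ e).choose i * (n₂ e).choose (k - i) := by
  classical
  rw [steinerWiener]
  have hstep : ∀ S ∈ Finset.powersetCard k (Finset.univ : Finset V),
      steinerDist T ↑S = ∑ e ∈ T.edgeFinset,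
        (if ∃ x ∈ S, ∃ y ∈ S, ¬ (T.deleteEdges {e}).Reachable x y then 1 else 0) := by
    intro S hS
    rw [mem_powersetCard_univ] at hS
    have hSne : S.Nonempty := Finset.card_pos.1 (by omega)
    rw [steinerDist_tree hT S hSne, Finset.card_filter]
    try exact Finset.sum_congr rfl fun e _ => if_congr Iff.rfl rfl rfl
  rw [Finset.sum_congr rfl hstep, Finset.sum_comm]
  refine Finset.sum_congr rfl fun e he => ?_
  rw [mem_edgeFinset] at he
  obtain ⟨u, v, rfl, h1, h2⟩ := hn e he
  have huv : T.Adj u v := he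
  set G' := T.deleteEdges {s(u, v)} with hG'
  -- the two sides
  set A : Finset V := univ.filter (fun w => G'.Reachable u w) with hA
  set B : Finset V := univ.filter (fun w => G'.Reachable v w) with hB
  have hbridge : ¬ G'.Reachable u v := by
    have hb : T.IsBridge s(u, v) :=
      (isAcyclic_iff_forall_adj_isBridge.1 hT.IsAcyclic) huv
    rw [isBridge_iff] at hb
    exact hb
  have hcover : ∀ w, G'.Reachable u w ∨ G'.Reachable v w := by
    intro w
    obtain ⟨p⟩ := hT.isConnected.preconnected u w
    exact cover_aux p (Or.inl (Reachable.refl _))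
  have hU : A ∪ B = univ := by
    ext w
    simp only [hA, hB, Finset.mem_union, Finset.mem_filter, Finset.mem_univ, true_and]
    exact iff_of_true (hcover w) trivial
  have hd : Disjoint A B := by
    rw [Finset.disjoint_left]
    intro w hw hw'
    rw [hA, Finset.mem_filter] at hw
    rw [hB, Finset.mem_filter] at hw'
    exact hbridge (hw.2.trans hw'.2.symm)
  have hAcard : n₁ s(u, v) = A.card := by
    rw [h1, ← Set.ncard_coe_finset]
    congr 1
    ext w
    simp [hA]
  have hBcard : n₂ s(u, v) = B.card := by
    rw [h2, ← Set.ncard_coe_finset]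
    congr 1
    ext w
    simp [hB]
  rw [hAcard, hBcard, ← count_cross A B hU hd]
  rw [← Finset.card_filter]
  congr 1
  apply Finset.filter_congr
  intro S hS
  constructor
  · rintro ⟨x, hx, y, hy, hxy⟩
    rcases hcover x with hux | hvx
    · rcases hcover y with huy | hvy
      · exact absurd (hux.symm.trans huy) hxy
      · exact ⟨⟨x, Finset.mem_inter.2 ⟨hx, by simp [hA, hux]⟩⟩,
          ⟨y, Finset.mem_inter.2 ⟨hy, by simp [hB, hvy]⟩⟩⟩
    · rcases hcover y with huy | hvy
      · exact ⟨⟨y, Finset.mem_inter.2 ⟨hy, by simp [hA, huy]⟩⟩,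
          ⟨x, Finset.mem_inter.2 ⟨hx, by simp [hB, hvx]⟩⟩⟩
      · exact absurd (hvx.symm.trans hvy) hxy
  · rintro ⟨⟨x, hx⟩, ⟨y, hy⟩⟩
    rw [Finset.mem_inter, hA, Finset.mem_filter] at hx
    rw [Finset.mem_inter, hB, Finset.mem_filter] at hy
    refine ⟨x, hx.1, y, hy.1, fun hr => ?_⟩
    exact hbridge ((hx.2.2.trans hr).trans hy.2.2.symm)
end

section
/- Let T be a tree of order n. Then SW₃(T) = ((n−2)/2) · W(T), where W(T) is the ordinary Wiener index of T. -/
open SimpleGraph Finset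

variable {V : Type*}

/-- The Wiener index: the sum of the distances over all unordered pairs of vertices. -/
noncomputable def wiener [Fintype V] (G : SimpleGraph V) : ℕ :=
  (∑ u : V, ∑ v : V, G.dist u v) / 2

section Aux

variable {T : SimpleGraph V}

private lemma reach_of_not_mem_edges {u v : V} {e : Sym2 V} (p : T.Walk u v)
    (h : e ∉ p.edges) : (T \ fromEdgeSet {e}).Reachable u v := by
  refine ⟨p.transfer _ fun e' he' => ?_⟩
  simp only [edgeSet_sdiff, edgeSet_fromEdgeSet, edgeSet_sdiff_sdiff_isDiag, Set.mem_diff,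
    Set.mem_singleton_iff]
  exact ⟨p.edges_subset_edgeSet he', fun h' => h (h' ▸ he')⟩

private lemma not_reach_of_mem_edges (hT : T.IsTree) {u v : V} {e : Sym2 V} {p : T.Walk u v}
    (hp : p.IsPath) (h : e ∈ p.edges) : ¬ (T \ fromEdgeSet {e}).Reachable u v := by
  classical
  rintro ⟨r⟩
  have hle : (T \ fromEdgeSet {e}) ≤ T := sdiff_le
  set r' : (T \ fromEdgeSet {e}).Walk u v := (r.toPath : (T \ fromEdgeSet {e}).Walk u v)
  have hr' : r'.IsPath := (r.toPath).isPath
  set q : T.Walk u v := r'.transfer T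
    (fun e' he' => edgeSet_mono hle (r'.edges_subset_edgeSet he')) with hq
  have hqp : q.IsPath := by
    rw [Walk.isPath_def, hq, Walk.support_transfer]
    exact hr'.support_nodup
  have hpq : p = q := by
    have := hT.IsAcyclic.path_unique ⟨p, hp⟩ ⟨q, hqp⟩
    exact congrArg Subtype.val this
  rw [hpq, hq, Walk.edges_transfer] at h
  have := r'.edges_subset_edgeSet h
  rw [edgeSet_sdiff, edgeSet_fromEdgeSet] at this
  exact this.2 ⟨rfl, T.not_isDiag_of_mem_edgeSet this.1⟩

private lemma mem_edges_iff_not_reach (hT : T.IsTree) {u v : V} {e : Sym2 V} {p : T.Walk u v}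
    (hp : p.IsPath) : e ∈ p.edges ↔ ¬ (T \ fromEdgeSet {e}).Reachable u v := by
  constructor
  · exact fun h => not_reach_of_mem_edges hT hp h
  · intro h
    by_contra h'
    exact h (reach_of_not_mem_edges p h')

private lemma mem_edges_of_walk (hT : T.IsTree) {u v : V} {e : Sym2 V} {p : T.Walk u v}
    (hp : p.IsPath) (he : e ∈ p.edges) (q : T.Walk u v) : e ∈ q.edges := by
  by_contra h
  exact (mem_edges_iff_not_reach hT hp).mp he (reach_of_not_mem_edges q h)

private lemma two_sides (hT : T.IsTree) (a b x : V) :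
    (T \ fromEdgeSet {s(a, b)}).Reachable x a ∨ (T \ fromEdgeSet {s(a, b)}).Reachable x b := by
  have aux : ∀ {p q : V} (_ : T.Walk p q),
      (T \ fromEdgeSet {s(a, b)}).Reachable p q ∨
        (T \ fromEdgeSet {s(a, b)}).Reachable p a ∨
          (T \ fromEdgeSet {s(a, b)}).Reachable p b := by
    intro p q r
    induction r with
    | nil => exact Or.inl (Reachable.refl _)
    | @cons p' q' c' h r ih =>
      by_cases he : s(p', q') = s(a, b)
      · rw [Sym2.eq_iff] at he
        rcases he with ⟨rfl, rfl⟩ | ⟨rfl, rfl⟩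
        · exact Or.inr (Or.inl (Reachable.refl _))
        · exact Or.inr (Or.inr (Reachable.refl _))
      · have hadj : (T \ fromEdgeSet {s(a, b)}).Adj p' q' := by
          rw [sdiff_adj, fromEdgeSet_adj]
          exact ⟨h, fun hc => he (by simpa using hc.1)⟩
        rcases ih with h' | h' | h'
        · exact Or.inl (hadj.reachable.trans h')
        · exact Or.inr (Or.inl (hadj.reachable.trans h'))
        · exact Or.inr (Or.inr (hadj.reachable.trans h'))
  obtain ⟨r⟩ := hT.isConnected.preconnected x a
  rcases aux r with h | h | h
  exacts [Or.inl h, Or.inl h, Or.inr h]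

private lemma reach_iff (hT : T.IsTree) {a b : V} (hab : T.Adj a b) (u v : V) :
    (T \ fromEdgeSet {s(a, b)}).Reachable u v ↔
      ((T \ fromEdgeSet {s(a, b)}).Reachable u a ↔ (T \ fromEdgeSet {s(a, b)}).Reachable v a) := by
  have hnab : ¬ (T \ fromEdgeSet {s(a, b)}).Reachable a b :=
    (isBridge_iff.mp ((isAcyclic_iff_forall_adj_isBridge.mp hT.IsAcyclic) hab))
  constructor
  · intro h
    exact ⟨fun h' => h.symm.trans h', fun h' => h.trans h'⟩
  · intro h
    by_cases hu : (T \ fromEdgeSet {s(a, b)}).Reachable u a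
    · exact hu.trans (h.mp hu).symm
    · rcases two_sides hT a b u with h' | hu'
      · exact absurd h' hu
      rcases two_sides hT a b v with hv' | hv'
      · exact absurd (h.mpr hv') hu
      · exact hu'.trans hv'.symm

private lemma steiner_three [Fintype V] (hT : T.IsTree) (u v w : V) :
    2 * steinerDist T ({u, v, w} : Set V) = T.dist u v + T.dist v w + T.dist u w := by
  classical
  obtain ⟨puv, hpuv, hluv⟩ := (hT.isConnected.preconnected u v).exists_path_of_dist
  obtain ⟨pvw, hpvw, hlvw⟩ := (hT.isConnected.preconnected v w).exists_path_of_dist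
  obtain ⟨puw, hpuw, hluw⟩ := (hT.isConnected.preconnected u w).exists_path_of_dist
  set A : Finset (Sym2 V) := puv.edges.toFinset with hA
  set B : Finset (Sym2 V) := pvw.edges.toFinset with hB
  set C : Finset (Sym2 V) := puw.edges.toFinset with hC
  set U : Finset (Sym2 V) := A ∪ B ∪ C with hU
  -- per-edge count
  have key : ∀ e ∈ U, ((if e ∈ A then 1 else 0) + (if e ∈ B then 1 else 0)
      + (if e ∈ C then 1 else 0) : ℕ) = 2 := by
    intro e
    induction e using Sym2.ind with
    | _ a b =>
      intro heU
      have hab : T.Adj a b := by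
        simp only [hU, hA, hB, hC, mem_union, List.mem_toFinset] at heU
        rcases heU with (h | h) | h
        exacts [puv.adj_of_mem_edges h, pvw.adj_of_mem_edges h, puw.adj_of_mem_edges h]
      have h1 : s(a, b) ∈ A ↔ ¬ ((T \ fromEdgeSet {s(a, b)}).Reachable u a ↔
          (T \ fromEdgeSet {s(a, b)}).Reachable v a) := by
        rw [hA, List.mem_toFinset, mem_edges_iff_not_reach hT hpuv, reach_iff hT hab]
      have h2 : s(a, b) ∈ B ↔ ¬ ((T \ fromEdgeSet {s(a, b)}).Reachable v a ↔
          (T \ fromEdgeSet {s(a, b)}).Reachable w a) := by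
        rw [hB, List.mem_toFinset, mem_edges_iff_not_reach hT hpvw, reach_iff hT hab]
      have h3 : s(a, b) ∈ C ↔ ¬ ((T \ fromEdgeSet {s(a, b)}).Reachable u a ↔
          (T \ fromEdgeSet {s(a, b)}).Reachable w a) := by
        rw [hC, List.mem_toFinset, mem_edges_iff_not_reach hT hpuw, reach_iff hT hab]
      have heU' : s(a, b) ∈ A ∨ s(a, b) ∈ B ∨ s(a, b) ∈ C := by
        simpa [hU, or_assoc] using heU
      by_cases c1 : (T \ fromEdgeSet {s(a, b)}).Reachable u a <;>
        by_cases c2 : (T \ fromEdgeSet {s(a, b)}).Reachable v a <;>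
        by_cases c3 : (T \ fromEdgeSet {s(a, b)}).Reachable w a <;>
        simp only [h1, h2, h3, c1, c2, c3] at heU' ⊢ <;> simp_all
  have hsum : T.dist u v + T.dist v w + T.dist u w = 2 * U.card := by
    have cardsub : ∀ D : Finset (Sym2 V), D ⊆ U →
        D.card = ∑ e ∈ U, (if e ∈ D then 1 else 0) := by
      intro D hD
      rw [Finset.sum_ite_mem, Finset.sum_const, smul_eq_mul, mul_one,
        Finset.inter_eq_right.mpr hD]
    have cA : A.card = T.dist u v := by
      rw [hA, List.toFinset_card_of_nodup hpuv.edges_nodup, Walk.length_edges, hluv]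
    have cB : B.card = T.dist v w := by
      rw [hB, List.toFinset_card_of_nodup hpvw.edges_nodup, Walk.length_edges, hlvw]
    have cC : C.card = T.dist u w := by
      rw [hC, List.toFinset_card_of_nodup hpuw.edges_nodup, Walk.length_edges, hluw]
    have hAU : A ⊆ U := by rw [hU]; exact subset_union_left.trans subset_union_left
    have hBU : B ⊆ U := by rw [hU]; exact subset_union_right.trans subset_union_left
    have hCU : C ⊆ U := by rw [hU]; exact subset_union_right
    rw [← cA, ← cB, ← cC, cardsub A hAU, cardsub B hBU, cardsub C hCU,
      ← Finset.sum_add_distrib, ← Finset.sum_add_distrib, Finset.sum_congr rfl key,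
      Finset.sum_const, smul_eq_mul, mul_comm]
  -- the witness subgraph
  have hHedge : (puv.toSubgraph ⊔ pvw.toSubgraph ⊔ puw.toSubgraph).edgeSet = (↑U : Set (Sym2 V)) := by
    ext e
    simp [Subgraph.edgeSet_sup, Walk.edgeSet_toSubgraph, hU, hA, hB, hC, or_assoc]
  have hmem : U.card ∈ {n | ∃ H : T.Subgraph, H.Connected ∧ ({u, v, w} : Set V) ⊆ H.verts ∧
      H.edgeSet.ncard = n} := by
    refine ⟨puv.toSubgraph ⊔ pvw.toSubgraph ⊔ puw.toSubgraph, ?_, ?_, ?_⟩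
    · apply Subgraph.connected_sup
      · apply (Subgraph.connected_sup puv.toSubgraph_connected.preconnected pvw.toSubgraph_connected.preconnected ?_).preconnected
        exact ⟨v, by simp [Walk.mem_verts_toSubgraph]⟩
      · exact puw.toSubgraph_connected.preconnected
      · exact ⟨u, by simp [Walk.mem_verts_toSubgraph]⟩
    · intro x hx
      rcases hx with rfl | rfl | rfl <;>
        simp [Subgraph.verts_sup, Walk.mem_verts_toSubgraph]
    · rw [hHedge, Set.ncard_coe_finset]
  have hle : steinerDist T ({u, v, w} : Set V) ≤ U.card := Nat.sInf_le hmem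
  have hge : U.card ≤ steinerDist T ({u, v, w} : Set V) := by
    apply le_csInf ⟨U.card, hmem⟩
    rintro m ⟨H, hc, hsub, rfl⟩
    have hu : u ∈ H.verts := hsub (by simp)
    have hv : v ∈ H.verts := hsub (by simp)
    have hw : w ∈ H.verts := hsub (by simp)
    have get : ∀ (x y : V), x ∈ H.verts → y ∈ H.verts → ∀ (p : T.Walk x y), p.IsPath →
        ∀ e, e ∈ p.edges → e ∈ H.edgeSet := by
      intro x y hx hy p hp e hep
      obtain ⟨r⟩ := hc.preconnected ⟨x, hx⟩ ⟨y, hy⟩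
      have hq : e ∈ (r.map H.hom).edges := mem_edges_of_walk hT hp hep (r.map H.hom)
      rw [Walk.edges_map, List.mem_map] at hq
      obtain ⟨e', he', rfl⟩ := hq
      have := r.edges_subset_edgeSet he'
      rw [Subgraph.edgeSet_coe] at this
      exact this
    have hsubE : (↑U : Set (Sym2 V)) ⊆ H.edgeSet := by
      intro e he
      have he' : e ∈ A ∨ e ∈ B ∨ e ∈ C := by
        simpa [hU, or_assoc] using he
      rcases he' with h | h | h
      · exact get u v hu hv puv hpuv e (by simpa [hA, List.mem_toFinset] using h)
      · exact get v w hv hw pvw hpvw e (by simpa [hB, List.mem_toFinset] using h)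
      · exact get u w hu hw puw hpuw e (by simpa [hC, List.mem_toFinset] using h)
    calc U.card = (↑U : Set (Sym2 V)).ncard := (Set.ncard_coe_finset U).symm
      _ ≤ H.edgeSet.ncard := Set.ncard_le_ncard hsubE (Set.toFinite _)
  have : steinerDist T ({u, v, w} : Set V) = U.card := le_antisymm hle hge
  omega

end Aux

section Count

private lemma swap_sum [Fintype V] [DecidableEq V] (k : ℕ) (f : V → V → ℕ) :
    ∑ S ∈ powersetCard k (univ : Finset V), ∑ x ∈ S, ∑ y ∈ S, f x y
      = ∑ x, ∑ y, f x y *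
        ((powersetCard k (univ : Finset V)).filter (fun S => x ∈ S ∧ y ∈ S)).card := by
  classical
  have h1 : ∀ S : Finset V, (∑ x ∈ S, ∑ y ∈ S, f x y)
      = ∑ x, ∑ y, if x ∈ S ∧ y ∈ S then f x y else 0 := by
    intro S
    have inner : ∀ x : V, (∑ y, if x ∈ S ∧ y ∈ S then f x y else 0)
        = if x ∈ S then ∑ y ∈ S, f x y else 0 := by
      intro x
      by_cases hx : x ∈ S <;> simp [hx, Finset.sum_ite_mem, Finset.univ_inter]
    calc ∑ x ∈ S, ∑ y ∈ S, f x y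
        = ∑ x, if x ∈ S then ∑ y ∈ S, f x y else 0 := by
          rw [Finset.sum_ite_mem, Finset.univ_inter]
      _ = ∑ x, ∑ y, if x ∈ S ∧ y ∈ S then f x y else 0 := by
          exact Finset.sum_congr rfl fun x _ => (inner x).symm
  rw [Finset.sum_congr rfl fun S _ => h1 S, Finset.sum_comm]
  refine Finset.sum_congr rfl fun x _ => ?_
  rw [Finset.sum_comm]
  refine Finset.sum_congr rfl fun y _ => ?_
  rw [← Finset.sum_filter, Finset.sum_const, smul_eq_mul, mul_comm]

private lemma count_two [Fintype V] [DecidableEq V] (k : ℕ) (hk : 2 ≤ k) {x y : V} (hxy : x ≠ y) :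
    ((powersetCard k (univ : Finset V)).filter (fun S => x ∈ S ∧ y ∈ S)).card
      = (Fintype.card V - 2).choose (k - 2) := by
  classical
  have hxy2 : ({x, y} : Finset V).card = 2 := card_pair hxy
  have hbij : ((powersetCard k (univ : Finset V)).filter (fun S => x ∈ S ∧ y ∈ S)).card
      = (powersetCard (k - 2) ((univ : Finset V) \ {x, y})).card := by
    refine Finset.card_bij' (fun S _ => S \ {x, y}) (fun A _ => A ∪ {x, y}) ?_ ?_ ?_ ?_
    · intro S hS
      simp only [mem_filter, mem_powersetCard] at hS
      obtain ⟨⟨hSu, hSc⟩, hx, hy⟩ := hS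
      rw [mem_powersetCard]
      refine ⟨sdiff_subset_sdiff hSu (le_refl _), ?_⟩
      rw [card_sdiff_of_subset (by simp [insert_subset_iff, hx, hy]), hSc, hxy2]
    · intro A hA
      rw [mem_powersetCard] at hA
      obtain ⟨hAu, hAc⟩ := hA
      have hdisj : Disjoint A ({x, y} : Finset V) := (Finset.subset_sdiff.mp hAu).2
      simp only [mem_filter, mem_powersetCard]
      refine ⟨⟨subset_univ _, ?_⟩, by simp, by simp⟩
      rw [card_union_of_disjoint hdisj, hAc, hxy2]
      omega
    · intro S hS
      simp only [mem_filter, mem_powersetCard] at hS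
      obtain ⟨⟨hSu, hSc⟩, hx, hy⟩ := hS
      show (S \ ({x, y} : Finset V)) ∪ {x, y} = S
      rw [sdiff_union_self_eq_union, Finset.union_eq_left]
      simp [insert_subset_iff, hx, hy]
    · intro A hA
      rw [mem_powersetCard] at hA
      have hdisj : Disjoint A ({x, y} : Finset V) := (Finset.subset_sdiff.mp hA.1).2
      show (A ∪ ({x, y} : Finset V)) \ {x, y} = A
      rw [Finset.union_sdiff_cancel_right hdisj]
  rw [hbij, card_powersetCard, card_sdiff_of_subset (subset_univ _), card_univ, hxy2]

end Count

theorem stmt_18 [Fintype V] (T : SimpleGraph V) (hT : T.IsTree) :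
    2 * steinerWiener T 3 = (Fintype.card V - 2) * wiener T := by
  classical
  set n := Fintype.card V with hn
  -- step 1 : each 3-set
  have key3 : ∀ S ∈ powersetCard 3 (univ : Finset V),
      (∑ x ∈ S, ∑ y ∈ S, T.dist x y) = 4 * steinerDist T (↑S : Set V) := by
    intro S hS
    rw [mem_powersetCard] at hS
    obtain ⟨u, v, w, huv, huw, hvw, rfl⟩ := Finset.card_eq_three.mp hS.2
    have hst := steiner_three hT u v w
    have hset : ((({u, v, w} : Finset V) : Set V)) = ({u, v, w} : Set V) := by simp
    rw [hset]
    have expand : (∑ x ∈ ({u, v, w} : Finset V), ∑ y ∈ ({u, v, w} : Finset V), T.dist x y)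
        = 2 * (T.dist u v + T.dist v w + T.dist u w) := by
      have h1 : u ∉ ({v, w} : Finset V) := by simp [huv, huw]
      have h2 : v ∉ ({w} : Finset V) := by simp [hvw]
      rw [show ({u, v, w} : Finset V) = insert u (insert v {w}) from rfl]
      rw [Finset.sum_insert h1, Finset.sum_insert h2, Finset.sum_singleton,
        Finset.sum_insert h1, Finset.sum_insert h2, Finset.sum_singleton,
        Finset.sum_insert h1, Finset.sum_insert h2, Finset.sum_singleton,
        Finset.sum_insert h1, Finset.sum_insert h2, Finset.sum_singleton]
      have d1 : T.dist v u = T.dist u v := SimpleGraph.dist_comm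
      have d2 : T.dist w u = T.dist u w := SimpleGraph.dist_comm
      have d3 : T.dist w v = T.dist v w := SimpleGraph.dist_comm
      rw [SimpleGraph.dist_self, SimpleGraph.dist_self, SimpleGraph.dist_self, d1, d2, d3]
      ring
    rw [expand]
    omega
  have h2 := swap_sum 3 (fun x y => T.dist x y)
  have e1 : 4 * steinerWiener T 3 = ∑ x, ∑ y, T.dist x y *
      ((powersetCard 3 (univ : Finset V)).filter (fun S => x ∈ S ∧ y ∈ S)).card := by
    rw [steinerWiener, Finset.mul_sum, ← Finset.sum_congr rfl key3, h2]
  have e2 : (∑ x, ∑ y, T.dist x y *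
      ((powersetCard 3 (univ : Finset V)).filter (fun S => x ∈ S ∧ y ∈ S)).card)
      = (n - 2) * (∑ x : V, ∑ y : V, T.dist x y) := by
    rw [Finset.mul_sum]
    refine Finset.sum_congr rfl fun x _ => ?_
    rw [Finset.mul_sum]
    refine Finset.sum_congr rfl fun y _ => ?_
    by_cases hxy : x = y
    · subst hxy; simp [SimpleGraph.dist_self]
    · rw [count_two 3 (by norm_num) hxy, Nat.choose_one_right, mul_comm, hn]
  -- evenness
  have key2 : ∀ S ∈ powersetCard 2 (univ : Finset V),
      Even (∑ x ∈ S, ∑ y ∈ S, T.dist x y) := by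
    intro S hS
    rw [mem_powersetCard] at hS
    obtain ⟨a, b, hab, rfl⟩ := Finset.card_eq_two.mp hS.2
    have h1 : a ∉ ({b} : Finset V) := by simp [hab]
    have expand : (∑ x ∈ ({a, b} : Finset V), ∑ y ∈ ({a, b} : Finset V), T.dist x y)
        = T.dist a b + T.dist a b := by
      rw [show ({a, b} : Finset V) = insert a {b} from rfl]
      rw [Finset.sum_insert h1, Finset.sum_singleton, Finset.sum_insert h1,
        Finset.sum_singleton, Finset.sum_insert h1, Finset.sum_singleton]
      have d1 : T.dist b a = T.dist a b := SimpleGraph.dist_comm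
      rw [SimpleGraph.dist_self, SimpleGraph.dist_self, d1]
      ring
    rw [expand]
    exact ⟨T.dist a b, rfl⟩
  have hMeven : Even (∑ x : V, ∑ y : V, T.dist x y) := by
    have h2' := swap_sum 2 (fun x y => T.dist x y)
    have e2' : (∑ x, ∑ y, T.dist x y *
        ((powersetCard 2 (univ : Finset V)).filter (fun S => x ∈ S ∧ y ∈ S)).card)
        = ∑ x : V, ∑ y : V, T.dist x y := by
      refine Finset.sum_congr rfl fun x _ => Finset.sum_congr rfl fun y _ => ?_
      by_cases hxy : x = y
      · subst hxy; simp [SimpleGraph.dist_self]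
      · rw [count_two 2 le_rfl hxy]
        simp
    rw [← e2', ← h2']
    exact Finset.even_sum _ key2
  obtain ⟨m, hm⟩ := hMeven
  have e3 : 4 * steinerWiener T 3 = (n - 2) * (∑ x : V, ∑ y : V, T.dist x y) := by
    rw [e1, e2]
  have hdiv : (∑ u : V, ∑ v : V, T.dist u v) / 2 = m := by omega
  rw [hm] at e3
  have h4 : (n - 2) * (m + m) = 2 * ((n - 2) * m) := by ring
  rw [wiener, hdiv]
  omega
end

section
/- Let G be a connected graph of order n and k an integer with 2 ≤ k ≤ n − 1. Then the average Steiner k-distance satisfies k − 1 ≤ μ_k(G) ≤ ((k−1)/(k+1))(n+1); equivalently, C(n,k)(k−1) ≤ SW_k(G) ≤ C(n,k)·(k−1)(n+1)/(k+1). -/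
open SimpleGraph Finset

variable {V : Type*}

namespace SteinerAux

open SimpleGraph Walk

variable {W : Type*}

/-! ### Basic facts about `steinerDist` -/

lemma steinerDist_le {G : SimpleGraph W} {S : Set W} (H : G.Subgraph)
    (h1 : H.Connected) (h2 : S ⊆ H.verts) : steinerDist G S ≤ H.edgeSet.ncard :=
  Nat.sInf_le ⟨H, h1, h2, rfl⟩

lemma top_subgraph_connected {G : SimpleGraph W} (hG : G.Connected) :
    (⊤ : G.Subgraph).Connected := by
  rw [Subgraph.connected_iff']
  exact (Subgraph.topIso (G := G)).connected_iff.mpr hG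

lemma steinerDist_spec {G : SimpleGraph W} (hG : G.Connected) (S : Set W) :
    ∃ H : G.Subgraph, H.Connected ∧ S ⊆ H.verts ∧ H.edgeSet.ncard = steinerDist G S := by
  have hne : {n | ∃ H : G.Subgraph, H.Connected ∧ S ⊆ H.verts ∧ H.edgeSet.ncard = n}.Nonempty :=
    ⟨(⊤ : G.Subgraph).edgeSet.ncard, ⟨⊤, top_subgraph_connected hG, by simp, rfl⟩⟩
  exact Nat.sInf_mem hne

/-! ### Spanning trees -/

lemma reachable_delete_of_walk {G : SimpleGraph W} {v w : W}
    (hr : (G.deleteEdges {s(v, w)}).Reachable v w) {a b : W} (p : G.Walk a b) :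
    (G.deleteEdges {s(v, w)}).Reachable a b := by
  induction p with
  | nil => exact Reachable.refl _
  | @cons x y z h q ih =>
    refine Reachable.trans ?_ ih
    by_cases hc : s(x, y) = s(v, w)
    · rw [Sym2.eq_iff] at hc
      rcases hc with ⟨rfl, rfl⟩ | ⟨rfl, rfl⟩
      · exact hr
      · exact hr.symm
    · exact Adj.reachable (by rw [deleteEdges_adj]; exact ⟨h, by simpa using hc⟩)

lemma exists_tree_le_aux [Fintype W] :
    ∀ (N : ℕ) (G : SimpleGraph W), G.edgeSet.ncard ≤ N → G.Connected →
      ∃ T : SimpleGraph W, T ≤ G ∧ T.IsTree := by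
  intro N
  induction N with
  | zero =>
    intro G hcard hG
    have hempty : G.edgeSet = ∅ := by
      rw [← Set.ncard_eq_zero (Set.toFinite _)]
      omega
    have hbot : G = ⊥ := edgeSet_eq_empty.mp hempty
    exact ⟨G, le_refl _, hG, by rw [hbot]; exact isAcyclic_bot⟩
  | succ N ih =>
    intro G hcard hG
    by_cases hac : G.IsAcyclic
    · exact ⟨G, le_refl _, hG, hac⟩
    · rw [isAcyclic_iff_forall_adj_isBridge] at hac
      push_neg at hac
      obtain ⟨v, w, hadj, hnb⟩ := hac
      rw [isBridge_iff] at hnb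
      push_neg at hnb
      have hr : (G.deleteEdges {s(v, w)}).Reachable v w := hnb
      have hG'conn : (G.deleteEdges {s(v, w)}).Connected := by
        have := hG.nonempty
        refine ⟨fun a b => ?_⟩
        obtain ⟨p⟩ := hG.preconnected a b
        exact reachable_delete_of_walk hr p
      have hcard' : (G.deleteEdges {s(v, w)}).edgeSet.ncard ≤ N := by
        rw [edgeSet_deleteEdges]
        have h2 : (G.edgeSet \ {s(v, w)}).ncard < G.edgeSet.ncard :=
          Set.ncard_diff_singleton_lt_of_mem hadj (Set.toFinite _)
        omega
      obtain ⟨T, hle, hT⟩ := ih (G.deleteEdges {s(v, w)}) hcard' hG'conn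
      exact ⟨T, hle.trans (deleteEdges_le _), hT⟩

lemma exists_tree_le [Fintype W] {G : SimpleGraph W} (hG : G.Connected) :
    ∃ T : SimpleGraph W, T ≤ G ∧ T.IsTree :=
  exists_tree_le_aux G.edgeSet.ncard G le_rfl hG

/-! ### Counting edges and vertices of subgraphs -/

lemma edgeFinset_card_eq_ncard [Fintype W] (G : SimpleGraph W) [Fintype G.edgeSet] :
    G.edgeFinset.card = G.edgeSet.ncard :=
  (Set.ncard_eq_toFinset_card' _).symm

lemma card_le_ncard_edges [Fintype W] {G : SimpleGraph W} (hG : G.Connected) :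
    Fintype.card W ≤ G.edgeSet.ncard + 1 := by
  classical
  obtain ⟨T, hle, hT⟩ := exists_tree_le hG
  have h1 := hT.card_edgeFinset
  have h2 : T.edgeFinset.card ≤ G.edgeSet.ncard := by
    rw [edgeFinset_card_eq_ncard]
    exact Set.ncard_le_ncard (edgeSet_mono hle) (Set.toFinite _)
  omega

lemma ncard_coe_edgeSet {G : SimpleGraph W} (H : G.Subgraph) :
    H.coe.edgeSet.ncard = H.edgeSet.ncard := by
  rw [← Subgraph.image_coe_edgeSet_coe,
    Set.ncard_image_of_injective _ (Sym2.map.injective Subtype.val_injective)]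

lemma card_coe_verts {G : SimpleGraph W} (H : G.Subgraph) [Fintype H.verts] :
    Fintype.card H.verts = H.verts.ncard := by
  rw [Set.ncard_eq_toFinset_card', Set.toFinset_card]

lemma subgraph_verts_le_edges [Fintype W] {G : SimpleGraph W} {H : G.Subgraph}
    (hH : H.Connected) : H.verts.ncard ≤ H.edgeSet.ncard + 1 := by
  classical
  haveI : Fintype H.verts := Fintype.ofFinite _
  have h := card_le_ncard_edges hH.coe
  rw [card_coe_verts H, ncard_coe_edgeSet] at h
  exact h

lemma subgraph_edges_le_verts [Fintype W] {G T : SimpleGraph W} (hT : T.IsAcyclic)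
    {H : G.Subgraph} (hH : H.Connected) (hsub : ∀ x y, H.Adj x y → T.Adj x y) :
    H.edgeSet.ncard + 1 ≤ H.verts.ncard := by
  classical
  haveI : Fintype H.verts := Fintype.ofFinite _
  haveI : Fintype H.coe.edgeSet := Fintype.ofFinite _
  have hac : H.coe.IsAcyclic := by
    intro v c hc
    let f : H.coe →g T := ⟨fun x => (x : W), fun h => hsub _ _ h⟩
    have hinj : Function.Injective (f : H.verts → W) := by
      intro a b hab
      exact Subtype.ext hab
    exact hT (c.map f) (hc.map hinj)
  have htree : H.coe.IsTree := ⟨hH.coe, hac⟩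
  have h1 := htree.card_edgeFinset
  rw [edgeFinset_card_eq_ncard, ncard_coe_edgeSet, card_coe_verts] at h1
  omega

/-! ### Transplanting a subgraph of a smaller graph -/

def transplant {T G : SimpleGraph W} (h : T ≤ G) (K : T.Subgraph) : G.Subgraph where
  verts := K.verts
  Adj := K.Adj
  adj_sub := fun hadj => h (K.adj_sub hadj)
  edge_vert := K.edge_vert
  symm := K.symm

lemma transplant_connected {T G : SimpleGraph W} (h : T ≤ G) {K : T.Subgraph}
    (hK : K.Connected) : (transplant h K).Connected := ⟨hK.coe⟩

lemma transplant_edgeSet {T G : SimpleGraph W} (h : T ≤ G) (K : T.Subgraph) :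
    (transplant h K).edgeSet = K.edgeSet := rfl

lemma transplant_verts {T G : SimpleGraph W} (h : T ≤ G) (K : T.Subgraph) :
    (transplant h K).verts = K.verts := rfl

/-! ### Deleting an edge of a tree -/

lemma not_reachable_delete {T : SimpleGraph W} (hT : T.IsAcyclic) {z w : W} (h : T.Adj z w)
    {e : Sym2 W} (he : e = s(z, w)) : ¬(T.deleteEdges {e}).Reachable z w := by
  subst he
  have hb := (isAcyclic_iff_forall_adj_isBridge.mp hT) h
  rw [isBridge_iff] at hb
  exact hb

lemma reachable_delete_or {T : SimpleGraph W} (hc : T.Connected) {z w : W} (hzw : T.Adj z w)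
    {e : Sym2 W} (he : e = s(z, w)) (x : W) :
    (T.deleteEdges {e}).Reachable x z ∨ (T.deleteEdges {e}).Reachable x w := by
  subst he
  have key : ∀ (a b : W) (_ : T.Walk a b),
      ((T.deleteEdges {s(z, w)}).Reachable b z ∨ (T.deleteEdges {s(z, w)}).Reachable b w) →
      ((T.deleteEdges {s(z, w)}).Reachable a z ∨ (T.deleteEdges {s(z, w)}).Reachable a w) := by
    intro a b p
    induction p with
    | nil => exact id
    | @cons a c b h q ih =>
      intro hb
      by_cases hcc : s(a, c) = s(z, w)
      · rw [Sym2.eq_iff] at hcc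
        rcases hcc with ⟨rfl, rfl⟩ | ⟨rfl, rfl⟩
        · exact Or.inl (Reachable.refl _)
        · exact Or.inr (Reachable.refl _)
      · have hadj : (T.deleteEdges {s(z, w)}).Adj a c := by
          rw [deleteEdges_adj]; exact ⟨h, by simpa using hcc⟩
        rcases ih hb with h1 | h1
        · exact Or.inl (hadj.reachable.trans h1)
        · exact Or.inr (hadj.reachable.trans h1)
  obtain ⟨p⟩ := hc.preconnected x z
  exact key x z p (Or.inl (Reachable.refl _))

lemma walk_transfer_delete {T : SimpleGraph W} {e : Sym2 W} {a b : W} (p : T.Walk a b)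
    (hp : e ∉ p.edges) : (T.deleteEdges {e}).Reachable a b :=
  ⟨p.toDeleteEdges {e} (fun e' he' => by
    simp only [Set.mem_singleton_iff]
    intro heq; subst heq; exact hp he')⟩

lemma path_subset_side [DecidableEq W] {T : SimpleGraph W} (hT : T.IsTree) {z w : W} (hzw : T.Adj z w)
    {e : Sym2 W} (he : e = s(z, w)) {a b : W} (p : T.Walk a b) (hp : p.IsPath)
    (ha : (T.deleteEdges {e}).Reachable a z) (hb : (T.deleteEdges {e}).Reachable b z) :
    e ∉ p.edges ∧ ∀ x ∈ p.support, (T.deleteEdges {e}).Reachable x z := by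
  obtain ⟨q⟩ := ha.trans hb.symm
  have hsub : ∀ f ∈ q.edges, f ∈ T.edgeSet := by
    intro f hf
    have := q.edges_subset_edgeSet hf
    rw [edgeSet_deleteEdges] at this
    exact this.1
  have hq'e : e ∉ (q.transfer T hsub).edges := by
    rw [Walk.edges_transfer]
    intro hmem
    have := q.edges_subset_edgeSet hmem
    rw [edgeSet_deleteEdges] at this
    exact this.2 rfl
  have huniq := hT.IsAcyclic.path_unique ⟨p, hp⟩ (q.transfer T hsub).toPath
  have hpe : e ∉ p.edges := by
    have hval : p = ((q.transfer T hsub).toPath : T.Walk a b) := congrArg Subtype.val huniq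
    rw [hval]
    intro hmem
    exact hq'e (Walk.edges_toPath_subset _ hmem)
  refine ⟨hpe, fun x hx => ?_⟩
  have htu : e ∉ (p.takeUntil x hx).edges := fun hmem =>
    hpe (Walk.edges_takeUntil_subset _ _ hmem)
  exact (walk_transfer_delete _ htu).symm.trans ha

lemma dist_split [DecidableEq W] {T : SimpleGraph W} {a b x : W} (p : T.Walk a b) (hx : x ∈ p.support) :
    T.dist a x + T.dist x b ≤ p.length := by
  have h := congrArg Walk.length (p.take_spec hx)
  rw [Walk.length_append] at h
  calc T.dist a x + T.dist x b ≤ (p.takeUntil x hx).length + (p.dropUntil x hx).length :=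
        Nat.add_le_add (dist_le _) (dist_le _)
    _ = p.length := h

lemma exists_sep_edge [DecidableEq W] {T : SimpleGraph W} (hT : T.IsTree) {S' : Finset W} {u v : W}
    (hu : u ∈ S') (hv : v ∈ S') (hne : u ≠ v)
    (hmax : ∀ a ∈ S', ∀ b ∈ S', T.dist a b ≤ T.dist u v) :
    ∃ u₁, T.Adj u u₁ ∧ ∀ a ∈ S', a ≠ u → (T.deleteEdges {s(u, u₁)}).Reachable a u₁ := by
  obtain ⟨p, hp⟩ := hT.isConnected.exists_walk_length_eq_dist u v
  cases p with
  | nil => exact absurd rfl hne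
  | @cons _ u₁ _ h q =>
    refine ⟨u₁, h, ?_⟩
    have hlen : q.length + 1 = T.dist u v := by simpa using hp
    have hd1 : T.dist u₁ v + 1 ≤ T.dist u v := by
      have := dist_le q
      omega
    obtain ⟨r, hr⟩ := hT.isConnected.exists_walk_length_eq_dist u₁ v
    have her : s(u, u₁) ∉ r.edges := by
      intro hmem
      have husup : u ∈ r.support := r.fst_mem_support_of_mem_edges hmem
      have hsplit := dist_split r husup
      have hpos : 0 < T.dist u₁ u := hT.isConnected.pos_dist_of_ne (fun hh => h.ne hh.symm)
      omega
    have hvu₁ : (T.deleteEdges {s(u, u₁)}).Reachable u₁ v := walk_transfer_delete r her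
    intro a ha hau
    rcases reachable_delete_or hT.isConnected h rfl a with h1 | h1
    · exfalso
      obtain ⟨g, hg⟩ := hT.isConnected.exists_walk_length_eq_dist a v
      have heg : s(u, u₁) ∈ g.edges := by
        by_contra hne'
        have h2 : (T.deleteEdges {s(u, u₁)}).Reachable a v := walk_transfer_delete g hne'
        exact not_reachable_delete hT.IsAcyclic h rfl (h1.symm.trans (h2.trans hvu₁.symm))
      have husup : u ∈ g.support := g.fst_mem_support_of_mem_edges heg
      have hsplit := dist_split g husup
      have hmaxav := hmax a ha v hv
      have hpos : 0 < T.dist a u := hT.isConnected.pos_dist_of_ne hau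
      omega
    · exact h1

/-! ### Separating edges -/

def SepAt (T : SimpleGraph W) (S : Finset W) (u : W) (e : Sym2 W) : Prop :=
  ∃ y, e = s(u, y) ∧ T.Adj u y ∧ ∀ a ∈ S, (T.deleteEdges {e}).Reachable a y

def Sep (T : SimpleGraph W) (S : Finset W) (e : Sym2 W) : Prop := ∃ u, SepAt T S u e

noncomputable def SepEdges [Fintype W] (T : SimpleGraph W) (S : Finset W) : Finset (Sym2 W) :=
  Set.Finite.toFinset (Set.toFinite {e | Sep T S e})

lemma mem_sepEdges [Fintype W] {T : SimpleGraph W} {S : Finset W} {e : Sym2 W} :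
    e ∈ SepEdges T S ↔ Sep T S e := by
  simp [SepEdges]

lemma sepAt_unique {T : SimpleGraph W} (hT : T.IsTree) {S : Finset W} (hS : S.Nonempty)
    {u u' : W} {e : Sym2 W} (h : SepAt T S u e) (h' : SepAt T S u' e) : u = u' := by
  obtain ⟨y, he, hadj, hside⟩ := h
  obtain ⟨y', he', hadj', hside'⟩ := h'
  have heq := he.symm.trans he'
  rw [Sym2.eq_iff] at heq
  rcases heq with ⟨h1, _⟩ | ⟨h1, h2⟩
  · exact h1
  · exfalso
    obtain ⟨a, ha⟩ := hS
    have r1 := hside a ha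
    have r2 := hside' a ha
    rw [← h1] at r2
    exact not_reachable_delete hT.IsAcyclic hadj he (r2.symm.trans r1)

lemma sepAt_edge_unique [DecidableEq W] {T : SimpleGraph W} (hT : T.IsTree) {S : Finset W} (hS : S.Nonempty)
    {x : W} {e₁ e₂ : Sym2 W} (h₁ : SepAt T S x e₁) (h₂ : SepAt T S x e₂) : e₁ = e₂ := by
  obtain ⟨a, ha⟩ := hS
  obtain ⟨p, hp⟩ := (hT.existsUnique_path x a).exists
  have key : ∀ (y : W) (e : Sym2 W), e = s(x, y) → T.Adj x y →
      (∀ a' ∈ S, (T.deleteEdges {e}).Reachable a' y) → e ∈ p.edges := by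
    intro y e he hadj hside
    by_contra hne
    have h2 : (T.deleteEdges {e}).Reachable x a := walk_transfer_delete p hne
    exact not_reachable_delete hT.IsAcyclic hadj he (h2.trans (hside a ha))
  obtain ⟨y₁, he₁, hadj₁, hside₁⟩ := h₁
  obtain ⟨y₂, he₂, hadj₂, hside₂⟩ := h₂
  have m₁ := key y₁ e₁ he₁ hadj₁ hside₁
  have m₂ := key y₂ e₂ he₂ hadj₂ hside₂
  cases p with
  | nil => simp at m₁
  | @cons _ c _ hxc q =>
    rw [Walk.edges_cons] at m₁ m₂
    have hxq : x ∉ q.support := ((Walk.cons_isPath_iff _ _).mp hp).2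
    rcases List.mem_cons.mp m₁ with m₁ | m₁
    · rcases List.mem_cons.mp m₂ with m₂ | m₂
      · exact m₁.trans m₂.symm
      · exact absurd (q.fst_mem_support_of_mem_edges (he₂ ▸ m₂)) hxq
    · exact absurd (q.fst_mem_support_of_mem_edges (he₁ ▸ m₁)) hxq

/-! ### Connectedness of finite sups of subgraphs -/

lemma sup_connected {β : Type*} {G : SimpleGraph W} {f : β → G.Subgraph} {a0 : W}
    (hconn : ∀ b, (f b).Connected) (hmem : ∀ b, a0 ∈ (f b).verts)
    {A : Finset β} (hA : A.Nonempty) : (A.sup f).Connected := by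
  induction hA using Finset.Nonempty.cons_induction with
  | singleton a => rw [Finset.sup_singleton]; exact hconn a
  | cons a s ha hs ih =>
    rw [Finset.sup_cons]
    refine Subgraph.connected_sup (hconn a).preconnected ih.preconnected ?_
    obtain ⟨b, hb⟩ := hs
    refine ⟨a0, ?_⟩
    rw [Subgraph.verts_inf]
    exact ⟨hmem a, Subgraph.verts_mono (Finset.le_sup hb) (hmem b)⟩

/-! ### The key per-set estimate -/

lemma steiner_key [Fintype W] {G T : SimpleGraph W} (hTG : T ≤ G) (hT : T.IsTree)
    {S : Finset W} (hS : S.Nonempty) :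
    steinerDist G ↑S + 1 + (SepEdges T S).card ≤ Fintype.card W := by
  classical
  obtain ⟨a0, ha0⟩ := hS
  have hpath : ∀ b : W, ∃ p : T.Walk a0 b, p.IsPath := fun b =>
    (hT.existsUnique_path a0 b).exists
  choose pb hpb using hpath
  set Wset : Finset W := S.biUnion (fun b => (pb b).support.toFinset) with hWdef
  set K : T.Subgraph := S.sup (fun b => (pb b).toSubgraph) with hKdef
  have hKconn : K.Connected := sup_connected (fun b => (pb b).toSubgraph_connected)
      (fun b => (pb b).start_mem_verts_toSubgraph) ⟨a0, ha0⟩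
  have hSK : (↑S : Set W) ⊆ K.verts := by
    intro b hb
    exact Subgraph.verts_mono (Finset.le_sup hb) ((pb b).end_mem_verts_toSubgraph)
  have hKW : K.verts ⊆ ↑Wset := by
    have hv : K.verts = S.sup (fun b => ((pb b).toSubgraph).verts) := by
      rw [hKdef]; exact Finset.comp_sup_eq_sup_comp Subgraph.verts (fun _ _ => rfl) rfl
    rw [hv]
    refine Finset.sup_le ?_
    intro b hb y hy
    rw [Walk.mem_verts_toSubgraph] at hy
    exact Finset.mem_coe.mpr (Finset.mem_biUnion.mpr ⟨b, hb, List.mem_toFinset.mpr hy⟩)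
  have h2 : K.edgeSet.ncard + 1 ≤ K.verts.ncard :=
    subgraph_edges_le_verts hT.IsAcyclic hKconn (fun x y hxy => K.adj_sub hxy)
  have h3 : K.verts.ncard ≤ Wset.card := by
    have := Set.ncard_le_ncard hKW (Set.toFinite _)
    rwa [Set.ncard_coe_finset] at this
  have h1 : steinerDist G ↑S ≤ K.edgeSet.ncard :=
    steinerDist_le (transplant hTG K) (transplant_connected hTG hKconn) hSK
  have h4 : (SepEdges T S).card ≤ (Finset.univ \ Wset).card := by
    refine Finset.card_le_card_of_injOn
      (fun e => if h : Sep T S e then h.choose else a0) ?_ ?_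
    · intro e he
      rw [Finset.mem_coe, mem_sepEdges] at he
      dsimp only
      rw [dif_pos he]
      obtain ⟨y, hee, hadj, hside⟩ := he.choose_spec
      rw [Finset.mem_coe, Finset.mem_sdiff]
      refine ⟨Finset.mem_univ _, fun hmem => ?_⟩
      rw [hWdef, Finset.mem_biUnion] at hmem
      obtain ⟨b, hb, hxb⟩ := hmem
      rw [List.mem_toFinset] at hxb
      have hK3 := path_subset_side hT hadj.symm (hee.trans (Sym2.eq_swap)) (pb b) (hpb b)
        (hside a0 ha0) (hside b hb)
      have hxy := hK3.2 _ hxb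
      exact not_reachable_delete hT.IsAcyclic hadj hee hxy
    · intro e₁ h₁ e₂ h₂ heq
      rw [Finset.mem_coe, mem_sepEdges] at h₁ h₂
      dsimp only at heq
      rw [dif_pos h₁, dif_pos h₂] at heq
      have s₁ := h₁.choose_spec
      have s₂ := h₂.choose_spec
      rw [heq] at s₁
      exact sepAt_edge_unique hT ⟨a0, ha0⟩ s₁ s₂
  have h6 : (Finset.univ \ Wset).card + Wset.card = Fintype.card W := by
    rw [Finset.card_sdiff_add_card_eq_card (Finset.subset_univ _), Finset.card_univ]
  omega

/-! ### Two separating pairs per `(k+1)`-set -/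

lemma exists_two_sepAt [DecidableEq W] {T : SimpleGraph W} (hT : T.IsTree) {S' : Finset W}
    (h2 : 2 ≤ S'.card) :
    ∃ uv : W × W, uv.1 ∈ S' ∧ uv.2 ∈ S' ∧ uv.1 ≠ uv.2 ∧
      (∃ e, SepAt T (S'.erase uv.1) uv.1 e) ∧ (∃ e, SepAt T (S'.erase uv.2) uv.2 e) := by
  have hne : (S' ×ˢ S').Nonempty := by
    obtain ⟨a, ha⟩ := Finset.card_pos.mp (by omega : 0 < S'.card)
    exact ⟨(a, a), Finset.mem_product.mpr ⟨ha, ha⟩⟩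
  obtain ⟨⟨u, v⟩, huv, hmax⟩ := Finset.exists_max_image (S' ×ˢ S')
    (fun p => T.dist p.1 p.2) hne
  rw [Finset.mem_product] at huv
  obtain ⟨a, ha, b, hb, hab⟩ := Finset.one_lt_card.mp (by omega : 1 < S'.card)
  have hdpos : 0 < T.dist u v := by
    have h5 := hmax (a, b) (Finset.mem_product.mpr ⟨ha, hb⟩)
    have h6 := hT.isConnected.pos_dist_of_ne hab
    simp only at h5
    omega
  have hune : u ≠ v := by
    intro h
    rw [h, SimpleGraph.dist_self] at hdpos
    omega
  have hmax' : ∀ x ∈ S', ∀ y ∈ S', T.dist x y ≤ T.dist u v :=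
    fun x hx y hy => hmax (x, y) (Finset.mem_product.mpr ⟨hx, hy⟩)
  obtain ⟨u₁, hadj₁, hside₁⟩ := exists_sep_edge hT huv.1 huv.2 hune hmax'
  have hmax'' : ∀ x ∈ S', ∀ y ∈ S', T.dist x y ≤ T.dist v u := by
    intro x hx y hy
    exact (hmax' x hx y hy).trans_eq (SimpleGraph.dist_comm)
  obtain ⟨v₁, hadj₂, hside₂⟩ := exists_sep_edge hT huv.2 huv.1 hune.symm hmax''
  refine ⟨(u, v), huv.1, huv.2, hune, ⟨s(u, u₁), u₁, rfl, hadj₁, ?_⟩,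
    ⟨s(v, v₁), v₁, rfl, hadj₂, ?_⟩⟩
  · intro a' ha'
    rw [Finset.mem_erase] at ha'
    exact hside₁ a' ha'.2 ha'.1
  · intro a' ha'
    rw [Finset.mem_erase] at ha'
    exact hside₂ a' ha'.2 ha'.1

lemma two_choose_le_sum_sep [Fintype W] {T : SimpleGraph W} (hT : T.IsTree) {k : ℕ}
    (hk : 2 ≤ k) :
    2 * (Fintype.card W).choose (k + 1) ≤
      ∑ S ∈ Finset.powersetCard k (Finset.univ : Finset W), (SepEdges T S).card := by
  classical
  haveI : Nonempty W := hT.isConnected.nonempty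
  rw [← Finset.card_sigma]
  have hch := fun (S' : Finset W) (h : 2 ≤ S'.card) => exists_two_sepAt hT h
  choose uv hu hv huv he₁ he₂ using hch
  choose E₁ hE₁ using he₁
  choose E₂ hE₂ using he₂
  set F : Finset W × Bool → ((_ : Finset W) × Sym2 W) := fun x =>
    if h : 2 ≤ x.1.card then
      (cond x.2 ⟨x.1.erase (uv x.1 h).1, E₁ x.1 h⟩ ⟨x.1.erase (uv x.1 h).2, E₂ x.1 h⟩)
    else ⟨∅, s(Classical.arbitrary W, Classical.arbitrary W)⟩ with hFdef
  have hmemcard : ∀ S' : Finset W, S' ∈ Finset.powersetCard (k + 1) (Finset.univ : Finset W) →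
      S'.card = k + 1 := by
    intro S' hS'
    rw [Finset.mem_powersetCard] at hS'
    exact hS'.2
  have hmaps : ∀ x ∈ (Finset.powersetCard (k + 1) (Finset.univ : Finset W)) ×ˢ
      (Finset.univ : Finset Bool),
      F x ∈ (Finset.powersetCard k (Finset.univ : Finset W)).sigma (fun S => SepEdges T S) := by
    rintro ⟨S', b⟩ hx
    rw [Finset.mem_product] at hx
    have hcS : S'.card = k + 1 := hmemcard S' hx.1
    have hc2 : 2 ≤ S'.card := by omega
    rw [hFdef]
    dsimp only
    rw [dif_pos hc2]
    cases b
    · simp only [Bool.cond_false]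
      refine Finset.mem_sigma.mpr ⟨?_, ?_⟩
      · rw [Finset.mem_powersetCard]
        refine ⟨Finset.subset_univ _, ?_⟩
        rw [Finset.card_erase_of_mem (hv S' hc2), hcS]
        omega
      · exact mem_sepEdges.mpr ⟨(uv S' hc2).2, hE₂ S' hc2⟩
    · simp only [Bool.cond_true]
      refine Finset.mem_sigma.mpr ⟨?_, ?_⟩
      · rw [Finset.mem_powersetCard]
        refine ⟨Finset.subset_univ _, ?_⟩
        rw [Finset.card_erase_of_mem (hu S' hc2), hcS]
        omega
      · exact mem_sepEdges.mpr ⟨(uv S' hc2).1, hE₁ S' hc2⟩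
  have hinjF : Set.InjOn F ↑((Finset.powersetCard (k + 1) (Finset.univ : Finset W)) ×ˢ
      (Finset.univ : Finset Bool)) := by
    rintro ⟨S₁, b₁⟩ hx₁ ⟨S₂, b₂⟩ hx₂ heq
    rw [Finset.mem_coe, Finset.mem_product] at hx₁ hx₂
    have hcS₁ : S₁.card = k + 1 := hmemcard S₁ hx₁.1
    have hcS₂ : S₂.card = k + 1 := hmemcard S₂ hx₂.1
    have hc₁ : 2 ≤ S₁.card := by omega
    have hc₂ : 2 ≤ S₂.card := by omega
    rw [hFdef] at heq
    dsimp only at heq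
    rw [dif_pos hc₁, dif_pos hc₂] at heq
    have main : ∀ (w₁ w₂ : W) (e₁ e₂ : Sym2 W),
        w₁ ∈ S₁ → w₂ ∈ S₂ → SepAt T (S₁.erase w₁) w₁ e₁ → SepAt T (S₂.erase w₂) w₂ e₂ →
        (⟨S₁.erase w₁, e₁⟩ : (_ : Finset W) × Sym2 W) = ⟨S₂.erase w₂, e₂⟩ →
        S₁ = S₂ ∧ w₁ = w₂ := by
      intro w₁ w₂ e₁ e₂ hw₁ hw₂ hs₁ hs₂ hEq
      have hfst : S₁.erase w₁ = S₂.erase w₂ := congrArg Sigma.fst hEq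
      have hsnd : e₁ = e₂ := congrArg (fun z => z.2) hEq
      have hnonempty : (S₂.erase w₂).Nonempty := by
        refine Finset.card_pos.mp ?_
        rw [Finset.card_erase_of_mem hw₂, hcS₂]
        omega
      rw [hfst] at hs₁
      rw [← hsnd] at hs₂
      have hw : w₁ = w₂ := sepAt_unique hT hnonempty hs₁ hs₂
      refine ⟨?_, hw⟩
      rw [← Finset.insert_erase hw₁, hfst, hw, Finset.insert_erase hw₂]
    cases b₁ <;> cases b₂ <;> simp only [Bool.cond_false, Bool.cond_true] at heq
    · obtain ⟨hS12, -⟩ := main _ _ _ _ (hv S₁ hc₁) (hv S₂ hc₂) (hE₂ S₁ hc₁) (hE₂ S₂ hc₂) heq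
      rw [hS12]
    · obtain ⟨hS12, hw⟩ := main _ _ _ _ (hv S₁ hc₁) (hu S₂ hc₂) (hE₂ S₁ hc₁) (hE₁ S₂ hc₂) heq
      subst hS12
      exact absurd hw.symm (huv S₁ hc₁)
    · obtain ⟨hS12, hw⟩ := main _ _ _ _ (hu S₁ hc₁) (hv S₂ hc₂) (hE₁ S₁ hc₁) (hE₂ S₂ hc₂) heq
      subst hS12
      exact absurd hw (huv S₁ hc₁)
    · obtain ⟨hS12, -⟩ := main _ _ _ _ (hu S₁ hc₁) (hu S₂ hc₂) (hE₁ S₁ hc₁) (hE₁ S₂ hc₂) heq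
      rw [hS12]
  have hle := Finset.card_le_card_of_injOn F hmaps hinjF
  rw [Finset.card_product, Finset.card_powersetCard, Finset.card_univ, Finset.card_univ,
    Fintype.card_bool] at hle
  calc 2 * (Fintype.card W).choose (k + 1) = (Fintype.card W).choose (k + 1) * 2 :=
        Nat.mul_comm _ _
    _ ≤ _ := hle

end SteinerAux

theorem stmt_19 [Fintype V] (G : SimpleGraph V) (hG : G.Connected)
    (n k : ℕ) (hn : n = Fintype.card V) (hk : 2 ≤ k) (hk' : k ≤ n - 1) :
    n.choose k * (k - 1) ≤ steinerWiener G k ∧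
      (k + 1) * steinerWiener G k ≤ n.choose k * ((k - 1) * (n + 1)) := by
  classical
  haveI : Nonempty V := hG.nonempty
  have hnpos : 0 < Fintype.card V := Fintype.card_pos
  subst hn
  have hk1 : k + 1 ≤ Fintype.card V := by omega
  constructor
  · -- lower bound
    have hper : ∀ S ∈ Finset.powersetCard k (Finset.univ : Finset V),
        k - 1 ≤ steinerDist G ↑S := by
      intro S hS
      obtain ⟨H, hc, hsub, hcard⟩ := SteinerAux.steinerDist_spec hG ↑S
      have hv : H.verts.ncard ≤ H.edgeSet.ncard + 1 := SteinerAux.subgraph_verts_le_edges hc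
      have hkc : k ≤ H.verts.ncard := by
        rw [Finset.mem_powersetCard] at hS
        have h7 := Set.ncard_le_ncard hsub (Set.toFinite _)
        rwa [Set.ncard_coe_finset, hS.2] at h7
      omega
    have hsum := Finset.card_nsmul_le_sum _ _ _ hper
    rw [Finset.card_powersetCard, Finset.card_univ, smul_eq_mul] at hsum
    exact hsum
  · -- upper bound
    obtain ⟨T, hTG, hT⟩ := SteinerAux.exists_tree_le hG
    have hkey : ∀ S ∈ Finset.powersetCard k (Finset.univ : Finset V),
        steinerDist G ↑S + 1 + (SteinerAux.SepEdges T S).card ≤ Fintype.card V := by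
      intro S hS
      rw [Finset.mem_powersetCard] at hS
      exact SteinerAux.steiner_key hTG hT (Finset.card_pos.mp (by omega))
    have hsum := Finset.sum_le_sum hkey
    rw [Finset.sum_add_distrib, Finset.sum_add_distrib, Finset.sum_const, Finset.sum_const,
      Finset.card_powersetCard, Finset.card_univ, smul_eq_mul, smul_eq_mul, mul_one] at hsum
    rw [show (∑ S ∈ Finset.powersetCard k (Finset.univ : Finset V), steinerDist G ↑S)
      = steinerWiener G k from rfl] at hsum
    have hsep := SteinerAux.two_choose_le_sum_sep hT hk (T := T) (W := V)
    set n' := Fintype.card V with hn'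
    set C := n'.choose k with hC
    set X := n'.choose (k + 1) with hX
    set SW := steinerWiener G k with hSW
    set P := ∑ S ∈ Finset.powersetCard k (Finset.univ : Finset V),
      (SteinerAux.SepEdges T S).card with hP
    -- identity: (k+1) * X = (n' - k) * C
    have hid1 : (k + 1) * X = (n' - k) * C := by
      obtain ⟨d, hd⟩ : ∃ d, n' = k + d := ⟨n' - k, by omega⟩
      have hp := Nat.add_one_mul_choose_eq (k + d) k
      rw [Nat.choose_succ_succ] at hp
      have hXd : X = (k + d).choose (k + 1) := by rw [hX, hd]
      have hCd : C = (k + d).choose k := by rw [hC, hd]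
      have hdd : n' - k = d := by omega
      rw [hXd, hCd, hdd]
      have h1 : (k + 1) * (k + d).choose k + d * (k + d).choose k =
          (k + 1) * (k + d).choose k + (k + 1) * (k + d).choose (k + 1) := by
        calc (k + 1) * (k + d).choose k + d * (k + d).choose k
            = (k + d + 1) * (k + d).choose k := by ring
          _ = ((k + d).choose k + (k + d).choose (k + 1)) * (k + 1) := hp
          _ = (k + 1) * (k + d).choose k + (k + 1) * (k + d).choose (k + 1) := by ring
      exact (Nat.add_left_cancel h1).symm
    -- main chain
    have hA : SW + C + P ≤ C * n' := hsum
    have hB : 2 * X ≤ P := hsep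
    have hchain : (k + 1) * SW + ((k + 1) * C + 2 * ((n' - k) * C)) ≤ (k + 1) * (C * n') := by
      have hB' : (k + 1) * (2 * X) ≤ (k + 1) * P := Nat.mul_le_mul_left _ hB
      have hA' : (k + 1) * (SW + C + P) ≤ (k + 1) * (C * n') := Nat.mul_le_mul_left _ hA
      have heq1 : (k + 1) * SW + ((k + 1) * C + 2 * ((n' - k) * C)) =
          (k + 1) * SW + (k + 1) * C + (k + 1) * (2 * X) := by rw [← hid1]; ring
      have heq2 : (k + 1) * (SW + C + P) = (k + 1) * SW + (k + 1) * C + (k + 1) * P := by ring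
      omega
    have hident : (k + 1) * (C * n') =
        C * ((k - 1) * (n' + 1)) + ((k + 1) * C + 2 * ((n' - k) * C)) := by
      obtain ⟨k', rfl⟩ : ∃ k', k = k' + 2 := ⟨k - 2, by omega⟩
      obtain ⟨m, hm⟩ : ∃ m, n' = k' + 3 + m := ⟨n' - (k' + 3), by omega⟩
      have e1 : k' + 2 - 1 = k' + 1 := by omega
      have e2 : n' - (k' + 2) = m + 1 := by omega
      rw [e1, e2, hm]
      ring
    rw [hident] at hchain
    exact Nat.le_of_add_le_add_right hchain
end
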